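/- arXiv:2003.07328 — 9 statements merged into one kernel-verified Lean document; each statement's English description precedes it below -/
import Mathlib

section
/- For all integers d, r ≥ 1 and 0 ≤ ℓ ≤ d, the following identity of formal power series holds: (1−x)^{d+1} · ∑_{t≥0} (rt)^ℓ (rt+1)^{d−ℓ} x^t = ∑_{(π,ε) ∈ ℤ_r ≀ S_d} x^{des_ℓ(π,ε)}. In other words, the r-colored ℓ-Eulerian polynomial A_{d,ℓ}^{(r)} equals the generating polynomial of the ℓ-descent statistic over the wreath product ℤ_r ≀ S_d. (Proposition 5.6) -/
open Polynomial PowerSeries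

/-- The value `π_i ∈ {1, …, d}` of the underlying permutation of an element of the wreath
product `ℤ_r ≀ S_d` at position `i ∈ {1, …, d}`, with the convention `π_0 = 0`
(and value `0` for out-of-range indices). -/
def wreathVal (d : ℕ) (π : Equiv.Perm (Fin d)) (i : ℕ) : ℕ :=
  if h : i - 1 < d ∧ 1 ≤ i then ((π ⟨i - 1, h.1⟩ : Fin d) : ℕ) + 1 else 0

/-- The color `c_i ∈ {0, …, r-1}` of an element of the wreath product `ℤ_r ≀ S_d` at
position `i ∈ {1, …, d}`, with the convention `c_0 = 0`. -/
def wreathCol (d r : ℕ) (ε : Fin d → Fin r) (i : ℕ) : ℕ :=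
  if h : i - 1 < d ∧ 1 ≤ i then ((ε ⟨i - 1, h.1⟩ : Fin r) : ℕ) else 0

/-- The descent set `Des(π, ε) ⊆ {0, 1, …, d-1}` of `(π, ε) ∈ ℤ_r ≀ S_d`:
`j ∈ Des(π, ε)` iff `π_j^{c_j} > π_{j+1}^{c_{j+1}}` in the order where
`i^{c} < j^{c'}` iff `c > c'`, or `c = c'` and `i < j`  (conventions `π_0 = 0`, `c_0 = 0`). -/
def wreathDes (d r : ℕ) (π : Equiv.Perm (Fin d)) (ε : Fin d → Fin r) : Finset ℕ :=
  (Finset.range d).filter fun j =>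
    wreathCol d r ε j < wreathCol d r ε (j + 1) ∨
      (wreathCol d r ε j = wreathCol d r ε (j + 1) ∧
        wreathVal d π (j + 1) < wreathVal d π j)

/-- The `ℓ`-descent statistic `des_ℓ(π, ε) = |Des_ℓ(π, ε)|`, where
`Des_ℓ(π, ε) = Des(π, ε) ∪ {0}` if `π_1 ∈ {1, …, ℓ}` and `Des_ℓ(π, ε) = Des(π, ε)`
otherwise. -/
def wreathDesL (d r ℓ : ℕ) (π : Equiv.Perm (Fin d)) (ε : Fin d → Fin r) : ℕ :=
  (wreathDes d r π ε ∪
      (if 1 ≤ wreathVal d π 1 ∧ wreathVal d π 1 ≤ ℓ then {0} else ∅)).card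

/-!
Fix `n`. A word `w : Fin d → Option (Fin n × Fin r)` assigns to each position either the value
`0` or a value in `1, …, n` together with a colour; there are `(rn)^ℓ (rn+1)^{d-ℓ}` words whose
first `ℓ` letters are nonzero. Sorting a word by (value, decreasing colour, position) produces
`(π, ε) ∈ ℤ_r ≀ S_d` and a sequence of values that is weakly increasing and strictly increasing
exactly at the `ℓ`-descents of `(π, ε)`, and every such sequence comes from exactly one word.
Shifting turns these sequences into `d`-subsets of a set of size `n + d - des_ℓ(π, ε)`, so
`(rn)^ℓ (rn+1)^{d-ℓ} = ∑_{(π,ε)} C(n + d - des_ℓ(π, ε), d)`, and the right-hand side is the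
coefficient of `x^n` in `∑_{(π,ε)} x^{des_ℓ(π,ε)} / (1 - x)^{d+1}`.
-/

open Finset OrderDual

lemma Finset.card_filter_lt_add_one (D : Finset ℕ) (j : ℕ) :
    #{i ∈ D | i < j + 1} = #{i ∈ D | i < j} + if j ∈ D then 1 else 0 := by
  rw [filter_congr (q := fun i => i < j ∨ i = j) fun i _ => Nat.lt_succ_iff_lt_or_eq,
    filter_or, card_union_of_disjoint (disjoint_filter.2 fun _ _ h h' => by omega), filter_eq']
  split_ifs <;> simp

section FinStrictMono

variable {d N : ℕ} {g : Fin d → Fin N}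

lemma Fin.val_le_of_strictMono (hg : StrictMono g) (j : Fin d) : (j : ℕ) ≤ g j := by
  simpa using card_le_card_of_injOn g (s := Iio j) (t := Iio (g j))
    (fun x hx => by simpa using hg (by simpa using hx)) hg.injective.injOn

lemma Fin.sub_val_le_of_strictMono (hg : StrictMono g) (j : Fin d) : d - j ≤ N - g j := by
  have := card_le_card_of_injOn g (s := Ioi j) (t := Ioi (g j))
    (fun x hx => by simpa using hg (by simpa using hx)) hg.injective.injOn
  simp only [Fin.card_Ioi] at this
  omega

end FinStrictMono

lemma Fin.monotone_cons_iff {α : Type*} [Preorder α] {d : ℕ} {a : α} {f : Fin d → α} :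
    Monotone (Fin.cons a f : Fin (d + 1) → α) ↔ (∀ i, a ≤ f i) ∧ Monotone f := by
  simp only [monotone_iff_forall_lt]
  exact Fin.liftFun_cons (· ≤ ·)

namespace ColoredEulerian

variable {d : ℕ}

def zeroCons (f : Fin d → ℕ) : ℕ → ℕ
  | 0 => 0
  | j + 1 => if h : j < d then f ⟨j, h⟩ else 0

@[simp] lemma zeroCons_zero (f : Fin d → ℕ) : zeroCons f 0 = 0 := rfl

lemma zeroCons_succ (f : Fin d → ℕ) {j : ℕ} (hj : j < d) : zeroCons f (j + 1) = f ⟨j, hj⟩ :=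
  dif_pos hj

@[simp] lemma zeroCons_succ_val (f : Fin d → ℕ) (j : Fin d) : zeroCons f (j + 1) = f j :=
  zeroCons_succ f j.isLt

lemma zeroCons_le {f : Fin d → ℕ} {n : ℕ} (hf : ∀ j, f j ≤ n) (j : ℕ) : zeroCons f j ≤ n := by
  rcases j with _ | j
  · exact Nat.zero_le n
  · simp only [zeroCons]
    split_ifs
    exacts [hf _, Nat.zero_le n]

def Compatible (d : ℕ) (D : Finset ℕ) (F : ℕ → ℕ) : Prop :=
  ∀ j < d, F j ≤ F (j + 1) ∧ (j ∈ D → F j < F (j + 1))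

instance (d : ℕ) (D : Finset ℕ) (F : ℕ → ℕ) : Decidable (Compatible d D F) := by
  unfold Compatible; infer_instance

section Counting

variable {D : Finset ℕ}

lemma Compatible.add_card_filter_le {F : ℕ → ℕ} (hF : Compatible d D F) {i j : ℕ} (hij : i ≤ j)
    (hjd : j ≤ d) : F i + #{k ∈ D | k < j} ≤ F j + #{k ∈ D | k < i} := by
  induction j, hij using Nat.le_induction with
  | base => rfl
  | succ j hij ih =>
    have := hF j (by omega)
    have := card_filter_lt_add_one D j
    split_ifs at this <;> grind

variable {f : Fin d → ℕ}

lemma Compatible.card_filter_le_apply (hf : Compatible d D (zeroCons f)) (j : Fin d) :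
    #{i ∈ D | i < (j : ℕ) + 1} ≤ f j := by
  simpa using hf.add_card_filter_le (i := 0) (j := j + 1) (Nat.zero_le _) j.isLt

lemma Compatible.strictMono_shift (hf : Compatible d D (zeroCons f)) :
    StrictMono fun j : Fin d => f j - #{i ∈ D | i < (j : ℕ) + 1} + j := by
  intro i j hij
  rw [Fin.lt_def] at hij
  have h := hf.add_card_filter_le (i := i + 1) (j := j + 1) (by omega) j.isLt
  have := hf.card_filter_le_apply i
  rw [zeroCons_succ_val, zeroCons_succ_val] at h
  dsimp only
  omega

lemma Compatible.shift_lt (hf : Compatible d D (zeroCons f)) (hD : D ⊆ range d) {n : ℕ}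
    (hn : ∀ j, f j ≤ n) (j : Fin d) : f j - #{i ∈ D | i < (j : ℕ) + 1} + j < n + d - #D := by
  have h := hf.add_card_filter_le (i := j + 1) (j := d) j.isLt le_rfl
  have := zeroCons_le hn d
  have := hf.card_filter_le_apply j
  rw [zeroCons_succ_val, filter_true_of_mem fun i hi => mem_range.1 (hD hi)] at h
  omega

lemma compatible_unshift {N : ℕ} {g : Fin d → Fin N} (hg : StrictMono g) :
    Compatible d D (zeroCons fun j => g j + #{i ∈ D | i < (j : ℕ) + 1} - j) := by
  intro j hj
  have h := card_filter_lt_add_one D j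
  rcases j with _ | j
  · have : #{i ∈ D | i < 0} = 0 := by simp
    rw [zeroCons_zero, zeroCons_succ _ hj]
    dsimp only
    grind
  · have h1 : g ⟨j, by omega⟩ < g ⟨j + 1, hj⟩ := hg (Fin.mk_lt_mk.2 (Nat.lt_succ_self j))
    have h2 := Fin.val_le_of_strictMono hg ⟨j, by omega⟩
    rw [zeroCons_succ _ hj, zeroCons_succ _ (show j < d by omega)]
    rw [Fin.lt_def] at h1
    dsimp only at h1 h2 ⊢
    grind

def compatibleEquivOrderEmb (hD : D ⊆ range d) (n : ℕ) :
    {f : Fin d → Fin (n + 1) // Compatible d D (zeroCons fun j => f j)} ≃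
      (Fin d ↪o Fin (n + d - #D)) where
  toFun f := OrderEmbedding.ofStrictMono
    (fun j => ⟨_, f.2.shift_lt hD (fun j => Nat.lt_succ_iff.1 (f.1 j).isLt) j⟩)
    (fun _ _ hij => f.2.strictMono_shift hij)
  invFun g := ⟨fun j => ⟨g j + #{i ∈ D | i < (j : ℕ) + 1} - j, by
      have h1 := Fin.val_le_of_strictMono g.strictMono j
      have h2 := Fin.sub_val_le_of_strictMono g.strictMono j
      have h3 : #{i ∈ D | i < (j : ℕ) + 1} ≤ #D := card_le_card (filter_subset _ _)
      have h4 : #D ≤ d := by simpa using card_le_card hD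
      omega⟩, compatible_unshift g.strictMono⟩
  left_inv f := by
    ext j
    have := f.2.card_filter_le_apply j
    simp only [Order.lt_add_one_iff, OrderEmbedding.coe_ofStrictMono] at this ⊢
    omega
  right_inv g := by
    ext j
    have := Fin.val_le_of_strictMono g.strictMono j
    simp only [Order.lt_add_one_iff, OrderEmbedding.coe_ofStrictMono] at this ⊢
    omega

theorem card_compatible (hD : D ⊆ range d) (n : ℕ) :
    Fintype.card {f : Fin d → Fin (n + 1) // Compatible d D (zeroCons fun j => f j)} =
      (n + d - #D).choose d := by
  rw [← Nat.card_eq_fintype_card, Nat.card_congr ((compatibleEquivOrderEmb hD n).trans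
    Set.powersetCard.ofFinEmbEquiv), Set.powersetCard.card, Nat.card_eq_fintype_card,
    Fintype.card_fin]

end Counting

lemma compatible_iff_monotone {β : Type*} [LinearOrder β] {D : Finset ℕ} {F : ℕ → ℕ}
    {κ : ℕ → β} (hD : ∀ j, j ∈ D ↔ j < d ∧ κ (j + 1) < κ j) :
    Compatible d D F ↔ Monotone fun j : Fin (d + 1) => toLex (F j, κ j) := by
  rw [Fin.monotone_iff_le_succ, Fin.forall_iff]
  refine forall₂_congr fun j hj => ?_
  simp only [Fin.val_castSucc, Fin.val_succ, Prod.Lex.toLex_le_toLex', hD j, hj, true_and]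
  constructor
  · rintro ⟨hle, hlt⟩
    exact ⟨hle, fun heq => not_lt.1 fun h => (hlt h).ne heq⟩
  · rintro ⟨hle, heq⟩
    exact ⟨hle, fun h => lt_of_le_of_ne hle fun he => (heq he).not_gt h⟩

abbrev Letter (n r : ℕ) := Option (Fin n × Fin r)

namespace Letter

variable {n r : ℕ}

def value : Letter n r → Fin (n + 1)
  | none => 0
  | some (a, _) => a.succ

def mk (v : Fin (n + 1)) (c : Fin r) : Letter n r := Fin.cases none (fun a => some (a, c)) v

@[simp] lemma value_mk (v : Fin (n + 1)) (c : Fin r) : (mk v c).value = v := by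
  cases v using Fin.cases <;> rfl

variable [NeZero r]

def color : Letter n r → Fin r
  | none => 0
  | some (_, c) => c

lemma color_mk {v : Fin (n + 1)} {c : Fin r} (h : v = 0 → c = 0) : (mk v c).color = c := by
  cases v using Fin.cases
  · exact (h rfl).symm
  · rfl

@[simp] lemma mk_value_color (x : Letter n r) : mk x.value x.color = x := by
  rcases x with _ | ⟨a, c⟩ <;> rfl

end Letter

section Sorting

variable {n r : ℕ} [NeZero r]

def sortKey (w : Fin d → Letter n r) (i : Fin d) : ℕ ×ₗ ℕᵒᵈ ×ₗ ℕ :=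
  toLex (((w i).value : ℕ), toLex (toDual ((w i).color : ℕ), (i : ℕ) + 1))

lemma sortKey_injective (w : Fin d → Letter n r) : Function.Injective (sortKey w) := by
  intro i j h
  have := congrArg (fun x => (ofLex (ofLex x).2).2) h
  simp only [sortKey, ofLex_toLex] at this
  exact Fin.ext (by omega)

def sortPerm (w : Fin d → Letter n r) : Equiv.Perm (Fin d) := Tuple.sort (sortKey w)

lemma sortPerm_eq_iff {w : Fin d → Letter n r} {π : Equiv.Perm (Fin d)} :
    sortPerm w = π ↔ Monotone (sortKey w ∘ π) := by
  rw [sortPerm, eq_comm, Tuple.eq_sort_iff]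
  exact and_iff_left_of_imp fun _ i j hij h =>
    absurd (π.injective (sortKey_injective w h)) hij.ne

lemma le_sortKey_iff (ℓ : ℕ) (w : Fin d → Letter n r) (i : Fin d) :
    toLex (0, toLex (toDual 0, ℓ + 1)) ≤ sortKey w i ↔ ((i : ℕ) < ℓ → w i ≠ none) := by
  rcases h : w i with _ | ⟨a, c⟩
  · simp [sortKey, h, Letter.value, Letter.color, Prod.Lex.toLex_le_toLex]
  · simp [sortKey, h, Letter.value, Prod.Lex.toLex_le_toLex]

end Sorting

section Wreath

variable {r ℓ : ℕ} (π : Equiv.Perm (Fin d)) (ε : Fin d → Fin r)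

@[simp] lemma wreathVal_zero : wreathVal d π 0 = 0 := by simp [wreathVal]

lemma wreathVal_succ {j : ℕ} (hj : j < d) : wreathVal d π (j + 1) = π ⟨j, hj⟩ + 1 := by
  simp [wreathVal, hj]

@[simp] lemma wreathCol_zero : wreathCol d r ε 0 = 0 := by simp [wreathCol]

lemma wreathCol_succ {j : ℕ} (hj : j < d) : wreathCol d r ε (j + 1) = ε ⟨j, hj⟩ := by
  simp [wreathCol, hj]

def wreathDesLSet (d r ℓ : ℕ) (π : Equiv.Perm (Fin d)) (ε : Fin d → Fin r) : Finset ℕ :=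
  wreathDes d r π ε ∪ (if 1 ≤ wreathVal d π 1 ∧ wreathVal d π 1 ≤ ℓ then {0} else ∅)

lemma wreathDesLSet_subset_range : wreathDesLSet d r ℓ π ε ⊆ range d := by
  refine union_subset (filter_subset _ _) ?_
  split_ifs with h
  · rcases Nat.eq_zero_or_pos d with rfl | hd
    · simp [wreathVal] at h
    · simpa using hd
  · exact empty_subset _

lemma wreathDesL_le : wreathDesL d r ℓ π ε ≤ d :=
  (card_le_card (wreathDesLSet_subset_range (ℓ := ℓ) π ε)).trans_eq (card_range d)

-- Position `0` carries a virtual letter `0` of colour `0` placed at position `ℓ + 1`: then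
-- `0 ∈ Des_ℓ(π, ε)` iff the first letter is smaller than it (`c_1 > 0` or `π_1 ≤ ℓ`).
def wreathKey (d r ℓ : ℕ) (π : Equiv.Perm (Fin d)) (ε : Fin d → Fin r) (j : ℕ) : ℕᵒᵈ ×ₗ ℕ :=
  toLex (toDual (wreathCol d r ε j), if j = 0 then ℓ + 1 else wreathVal d π j)

lemma mem_wreathDesLSet_iff (j : ℕ) :
    j ∈ wreathDesLSet d r ℓ π ε ↔
      j < d ∧ wreathKey d r ℓ π ε (j + 1) < wreathKey d r ℓ π ε j := by
  by_cases hj : j < d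
  · simp only [wreathDesLSet, wreathDes, wreathKey, mem_union, mem_filter, mem_range, hj,
      true_and, Prod.Lex.toLex_lt_toLex, toDual_lt_toDual, EmbeddingLike.apply_eq_iff_eq,
      Nat.add_eq_zero_iff, one_ne_zero, and_false, ↓reduceIte]
    rcases j with _ | j
    · have hv := wreathVal_succ π hj
      have hc := wreathCol_succ ε hj
      simp only [zero_add] at hv hc
      simp only [hv, hc, wreathVal_zero, wreathCol_zero]
      split_ifs <;> simp only [mem_singleton, notMem_empty] <;> grind
    · simp only [wreathVal_succ π hj, wreathCol_succ ε hj, wreathVal_succ π (Nat.lt_of_succ_lt hj),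
        wreathCol_succ ε (Nat.lt_of_succ_lt hj), Nat.add_eq_zero_iff, one_ne_zero, and_false,
        ↓reduceIte]
      split_ifs <;> simp only [mem_singleton, notMem_empty] <;> grind
  · simp only [hj, false_and, iff_false]
    exact fun h => hj (mem_range.1 (wreathDesLSet_subset_range π ε h))

end Wreath

section Fiber

variable {n r ℓ : ℕ} [NeZero r] {π : Equiv.Perm (Fin d)} {ε : Fin d → Fin r}

lemma toLex_value_wreathKey_eq_cons {w : Fin d → Letter n r}
    (hcol : ∀ j, (w (π j)).color = ε j) :
    (fun j : Fin (d + 1) =>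
        toLex (zeroCons (fun j => ((w (π j)).value : ℕ)) j, wreathKey d r ℓ π ε j)) =
      Fin.cons (toLex (0, toLex (toDual 0, ℓ + 1))) (sortKey w ∘ π) := by
  funext j
  cases j using Fin.cases with
  | zero => simp [wreathKey]
  | succ j => simp [wreathKey, sortKey, hcol, wreathCol_succ, wreathVal_succ]

theorem compatible_iff_sortPerm_eq {w : Fin d → Letter n r}
    (hcol : ∀ j, (w (π j)).color = ε j) :
    Compatible d (wreathDesLSet d r ℓ π ε) (zeroCons fun j => ((w (π j)).value : ℕ)) ↔
      (∀ i : Fin d, (i : ℕ) < ℓ → w i ≠ none) ∧ sortPerm w = π := by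
  rw [compatible_iff_monotone (mem_wreathDesLSet_iff π ε), toLex_value_wreathKey_eq_cons hcol,
    Fin.monotone_cons_iff, sortPerm_eq_iff]
  refine and_congr_left' ?_
  simp only [Function.comp_apply, le_sortKey_iff]
  exact π.forall_congr_right (q := fun i : Fin d => (i : ℕ) < ℓ → w i ≠ none)

lemma color_eq_zero_of_compatible {f : Fin d → Fin (n + 1)}
    (hf : Compatible d (wreathDesLSet d r ℓ π ε) (zeroCons fun j => (f j : ℕ))) {j : Fin d}
    (h0 : f j = 0) : ε j = 0 := by
  have h := (compatible_iff_monotone (mem_wreathDesLSet_iff π ε)).1 hf (Fin.zero_le j.succ)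
  have h' := (Prod.Lex.toLex_le_toLex'.1 h).2 (by simp [h0])
  simpa [wreathCol_succ, OrderDual.le_toDual] using (Prod.Lex.toLex_le_toLex'.1 h').1

def ofSorted (π : Equiv.Perm (Fin d)) (ε : Fin d → Fin r) (f : Fin d → Fin (n + 1)) :
    Fin d → Letter n r :=
  fun i => Letter.mk (f (π.symm i)) (ε (π.symm i))

theorem card_fiber :
    #{w : Fin d → Letter n r | (∀ i : Fin d, (i : ℕ) < ℓ → w i ≠ none) ∧
        (sortPerm w, fun j => (w (sortPerm w j)).color) = (π, ε)} =
      Fintype.card {f : Fin d → Fin (n + 1) //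
        Compatible d (wreathDesLSet d r ℓ π ε) (zeroCons fun j => f j)} := by
  rw [Fintype.card_subtype]
  refine card_nbij' (fun w j => (w (π j)).value) (ofSorted π ε) ?_ ?_ ?_ ?_
  · intro w hw
    simp only [coe_filter, mem_univ, true_and, Set.mem_ofPred_eq, Prod.mk.injEq] at hw ⊢
    obtain ⟨hℓ, rfl, hε⟩ := hw
    exact (compatible_iff_sortPerm_eq (congrFun hε)).2 ⟨hℓ, rfl⟩
  · intro f hf
    simp only [coe_filter, mem_univ, true_and, Set.mem_ofPred_eq, Prod.mk.injEq] at hf ⊢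
    have hcol : ∀ j, (ofSorted π ε f (π j)).color = ε j := fun j => by
      simpa [ofSorted] using Letter.color_mk (color_eq_zero_of_compatible hf)
    obtain ⟨hℓ, hπ⟩ := (compatible_iff_sortPerm_eq hcol).1 (by simpa [ofSorted] using hf)
    exact ⟨hℓ, hπ, by simpa [hπ] using funext hcol⟩
  · intro w hw
    simp only [coe_filter, mem_univ, true_and, Set.mem_ofPred_eq, Prod.mk.injEq] at hw
    obtain ⟨-, rfl, hε⟩ := hw
    funext i
    simp [ofSorted, ← hε]
  · intro f _
    funext j
    simp [ofSorted]

end Fiber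

theorem card_words {n r ℓ : ℕ} (hℓ : ℓ ≤ d) :
    #{w : Fin d → Letter n r | ∀ i : Fin d, (i : ℕ) < ℓ → w i ≠ none} =
      (r * n) ^ ℓ * (r * n + 1) ^ (d - ℓ) := by
  have : ({w : Fin d → Letter n r | ∀ i : Fin d, (i : ℕ) < ℓ → w i ≠ none} : Finset _) =
      Fintype.piFinset fun i : Fin d => if (i : ℕ) < ℓ then univ.erase none else univ := by
    ext w
    simp only [mem_filter, mem_univ, true_and, Fintype.mem_piFinset]
    refine forall_congr' fun i => ?_
    split_ifs with h <;> simp [h]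
  rw [this, Fintype.card_piFinset, Fin.prod_univ_eq_prod_range
    (fun i => #(if i < ℓ then (univ : Finset (Letter n r)).erase none else univ)),
    ← prod_range_mul_prod_Ico _ hℓ]
  have h1 : ∏ i ∈ range ℓ, #(if i < ℓ then (univ : Finset (Letter n r)).erase none else univ) =
      ∏ i ∈ range ℓ, r * n :=
    prod_congr rfl fun i hi => by simp [mem_range.1 hi, card_erase_of_mem, mul_comm]
  have h2 : ∏ i ∈ Ico ℓ d, #(if i < ℓ then (univ : Finset (Letter n r)).erase none else univ) =
      ∏ i ∈ Ico ℓ d, (r * n + 1) :=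
    prod_congr rfl fun i hi => by simp [not_lt.2 (mem_Ico.1 hi).1, mul_comm]
  rw [h1, h2, prod_const, prod_const, card_range, Nat.card_Ico]

theorem pow_mul_pow_eq_sum_choose {n r ℓ : ℕ} [NeZero r] (hℓ : ℓ ≤ d) :
    (r * n) ^ ℓ * (r * n + 1) ^ (d - ℓ) =
      ∑ π : Equiv.Perm (Fin d), ∑ ε : Fin d → Fin r, (n + d - wreathDesL d r ℓ π ε).choose d := by
  rw [← card_words hℓ, card_eq_sum_card_fiberwise (t := univ)
    (f := fun w => (sortPerm w, fun j => (w (sortPerm w j)).color)) fun _ _ => mem_univ _,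
    Fintype.sum_prod_type]
  refine sum_congr rfl fun π _ => sum_congr rfl fun ε _ => ?_
  rw [filter_filter, card_fiber, card_compatible (wreathDesLSet_subset_range π ε)]
  rfl

end ColoredEulerian

theorem PowerSeries.X_pow_eq_one_sub_X_pow_mul_mk_choose {R : Type*} [CommRing R] {d k : ℕ}
    (hk : k ≤ d) :
    (X : R⟦X⟧) ^ k = (1 - X) ^ (d + 1) * PowerSeries.mk fun n => ((n + d - k).choose d : R) := by
  have : (PowerSeries.mk fun n => ((n + d - k).choose d : R)) =
      X ^ k * PowerSeries.mk fun n => ((d + n).choose d : R) := by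
    ext n
    rw [coeff_X_pow_mul', coeff_mk, coeff_mk]
    split_ifs with h
    · congr 2
      omega
    · rw [Nat.choose_eq_zero_of_lt (by omega), Nat.cast_zero]
  rw [this, mul_left_comm, mul_comm ((1 - X) ^ (d + 1)), mk_add_choose_mul_one_sub_pow_eq_one,
    mul_one]

theorem colored_eulerian_eq_wreath_descent_gen_general (d r ℓ : ℕ) (hr : 1 ≤ r)
    (hℓ : ℓ ≤ d) :
    ((1 - PowerSeries.X : PowerSeries ℝ) ^ (d + 1) *
        PowerSeries.mk fun t : ℕ => ((r : ℝ) * t) ^ ℓ * ((r : ℝ) * t + 1) ^ (d - ℓ)) =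
      ∑ π : Equiv.Perm (Fin d), ∑ ε : Fin d → Fin r,
        (PowerSeries.X : PowerSeries ℝ) ^ wreathDesL d r ℓ π ε := by
  have : NeZero r := ⟨by omega⟩
  have hcount : (PowerSeries.mk fun t : ℕ => ((r : ℝ) * t) ^ ℓ * ((r : ℝ) * t + 1) ^ (d - ℓ)) =
      ∑ π : Equiv.Perm (Fin d), ∑ ε : Fin d → Fin r,
        PowerSeries.mk fun t => ((t + d - wreathDesL d r ℓ π ε).choose d : ℝ) := by
    ext t
    simp only [PowerSeries.coeff_mk, map_sum]
    exact_mod_cast ColoredEulerian.pow_mul_pow_eq_sum_choose hℓ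
  simp only [hcount, Finset.mul_sum]
  exact sum_congr rfl fun π _ => sum_congr rfl fun ε _ =>
    (PowerSeries.X_pow_eq_one_sub_X_pow_mul_mk_choose (ColoredEulerian.wreathDesL_le π ε)).symm

/-- Proposition 5.6: for `d, r ≥ 1` and `0 ≤ ℓ ≤ d`, the identity of formal power series
`(1-x)^{d+1} ∑_{t ≥ 0} (rt)^ℓ (rt+1)^{d-ℓ} x^t = ∑_{(π,ε) ∈ ℤ_r ≀ S_d} x^{des_ℓ(π,ε)}`
holds, i.e. the `r`-colored `ℓ`-Eulerian polynomial `A_{d,ℓ}^{(r)}` is the generating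
polynomial of the `ℓ`-descent statistic over the wreath product `ℤ_r ≀ S_d`. -/
theorem colored_eulerian_eq_wreath_descent_gen (d r ℓ : ℕ) (hd : 1 ≤ d) (hr : 1 ≤ r)
    (hℓ : ℓ ≤ d) :
    ((1 - PowerSeries.X : PowerSeries ℝ) ^ (d + 1) *
        PowerSeries.mk fun t : ℕ => ((r : ℝ) * t) ^ ℓ * ((r : ℝ) * t + 1) ^ (d - ℓ)) =
      ∑ π : Equiv.Perm (Fin d), ∑ ε : Fin d → Fin r,
        (PowerSeries.X : PowerSeries ℝ) ^ wreathDesL d r ℓ π ε :=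
  colored_eulerian_eq_wreath_descent_gen_general d r ℓ hr hℓ
end

section
/- For all integers d, r ≥ 1, 0 ≤ ℓ ≤ d, and every integer t ≥ 0: (rt)^ℓ (rt+1)^{d−ℓ} = ∑_{(π,ε) ∈ ℤ_r ≀ S_d} binom(d + t − des_ℓ(π,ε), d), where the binomial coefficient binom(d + t − m, d) is 0 whenever t < m. (Equivalent finite form of Proposition 5.6, obtained from the half-open unimodular decomposition of the half-open cube [0,r]^d_ℓ.) -/
open Polynomial


/-!
Write each coordinate of a lattice point `y` of the half-open cube `[0, rt]^d_ℓ` as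
`y i = r g i - c i` with `0 ≤ g i ≤ t` and a color `c i < r`. Sorting the coordinates by `g`,
ties broken by the colored letters `i^{c i}`, turns `(g, c)` into a colored permutation `(π, ε)`
and a weakly increasing `f ≤ t` that increases strictly at the descents of `(π, ε)`; the
half-open faces `y i ≥ 1` of the first `ℓ` coordinates are what put `0` into the descent set
when `π_1 ≤ ℓ`. Subtracting from `f` the number of strict increases forced so far and adding the
position turns these sequences into the `d`-subsets of `{0, …, d + t - des_ℓ - 1}`.
-/

open Finset OrderDual

theorem Fin.val_le_of_strictMono_s1 {n : ℕ} {h : Fin n → ℕ} (hh : StrictMono h) (k : Fin n) :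
    (k : ℕ) ≤ h k := by
  rcases n with _ | n
  · exact k.elim0
  induction k using Fin.induction with
  | zero => exact Nat.zero_le _
  | succ i ih => exact ih.trans_lt (hh Fin.castSucc_lt_succ)

namespace WreathDescent

section AscentSeqs

def strictSeqs (d n : ℕ) : Finset (Fin d → ℕ) :=
  {h ∈ Fintype.piFinset fun _ => range n | StrictMono h}

theorem card_strictSeqs (d n : ℕ) : #(strictSeqs d n) = n.choose d := by
  rw [← card_range n, ← card_powersetCard, card_range]
  refine card_bij (fun h _ => univ.image h) ?_ ?_ ?_
  · intro h hh
    simp only [strictSeqs, mem_filter, Fintype.mem_piFinset] at hh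
    refine mem_powersetCard.2 ⟨fun a ha => ?_, ?_⟩
    · obtain ⟨k, -, rfl⟩ := mem_image.1 ha
      exact hh.1 k
    · rw [card_image_of_injective _ hh.2.injective, card_univ, Fintype.card_fin]
  · intro h₁ hh₁ h₂ hh₂ himage
    simp only [strictSeqs, mem_filter] at hh₁ hh₂
    have hcard : #(univ.image h₁) = d := by
      rw [card_image_of_injective _ hh₁.2.injective, card_univ, Fintype.card_fin]
    have e₁ := orderEmbOfFin_unique hcard (fun k => mem_image_of_mem h₁ (mem_univ k)) hh₁.2
    have e₂ := orderEmbOfFin_unique hcard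
      (fun k => himage ▸ mem_image_of_mem h₂ (mem_univ k)) hh₂.2
    exact e₁.trans e₂.symm
  · intro s hs
    obtain ⟨hsub, hcard⟩ := mem_powersetCard.1 hs
    refine ⟨s.orderEmbOfFin hcard, ?_, image_orderEmbOfFin_univ s hcard⟩
    simp only [strictSeqs, mem_filter, Fintype.mem_piFinset]
    exact ⟨fun k => hsub (orderEmbOfFin_mem s hcard k), (s.orderEmbOfFin hcard).strictMono⟩

/-- `Fin.cons 0 f k.castSucc` is `f (k - 1)`, read as `0` for `k = 0`: so `0 ∈ D` forces
`0 < f 0`. -/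
def ascentSeqs (d t : ℕ) (D : Finset ℕ) : Finset (Fin d → ℕ) :=
  {f ∈ Fintype.piFinset fun _ => range (t + 1) |
    ∀ k : Fin d, (Fin.cons 0 f : Fin (d + 1) → ℕ) k.castSucc + (if (k : ℕ) ∈ D then 1 else 0) ≤ f k}

variable {n t : ℕ} {D : Finset ℕ}

lemma mem_ascentSeqs_succ {f : Fin (n + 1) → ℕ} :
    f ∈ ascentSeqs (n + 1) t D ↔ (∀ k, f k ≤ t) ∧ (if 0 ∈ D then 1 else 0) ≤ f 0 ∧
      ∀ i : Fin n, f i.castSucc + (if (i : ℕ) + 1 ∈ D then 1 else 0) ≤ f i.succ := by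
  simp only [ascentSeqs, mem_filter, Fintype.mem_piFinset, mem_range, Nat.lt_succ_iff]
  refine and_congr_right fun _ => ?_
  rw [Fin.forall_fin_succ]
  simp only [Fin.val_zero, Fin.cons_zero, Fin.castSucc_zero, zero_add, Fin.val_succ,
    ← Fin.succ_castSucc, Fin.cons_succ]
  exact Iff.rfl

def countBelow (D : Finset ℕ) (j : ℕ) : ℕ := ∑ i ∈ range j, if i ∈ D then 1 else 0

@[simp] lemma countBelow_zero : countBelow D 0 = 0 := sum_range_zero _

lemma countBelow_succ (j : ℕ) : countBelow D (j + 1) = countBelow D j + if j ∈ D then 1 else 0 :=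
  sum_range_succ _ _

lemma countBelow_eq_card {j : ℕ} (hD : D ⊆ range j) : countBelow D j = #D := by
  rw [countBelow, ← card_filter, filter_mem_eq_inter, inter_eq_right.2 hD]

lemma countBelow_le_of_mem_ascentSeqs {f : Fin (n + 1) → ℕ} (hf : f ∈ ascentSeqs (n + 1) t D)
    (k : Fin (n + 1)) : countBelow D (k + 1) ≤ f k := by
  obtain ⟨-, h0, hsucc⟩ := mem_ascentSeqs_succ.1 hf
  induction k using Fin.induction with
  | zero => simpa [countBelow_succ] using h0
  | succ i ih =>
    have := hsucc i
    rw [Fin.val_succ, countBelow_succ]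
    simp only [Fin.val_castSucc] at ih
    omega

def ascentShift (D : Finset ℕ) (f : Fin n → ℕ) (k : Fin n) : ℕ := f k + k - countBelow D (k + 1)

def ascentUnshift (D : Finset ℕ) (h : Fin n → ℕ) (k : Fin n) : ℕ := h k + countBelow D (k + 1) - k

lemma ascentShift_mem_strictSeqs (hD : D ⊆ range (n + 1)) {f : Fin (n + 1) → ℕ}
    (hf : f ∈ ascentSeqs (n + 1) t D) :
    ascentShift D f ∈ strictSeqs (n + 1) (n + 1 + t - #D) := by
  have hlow := countBelow_le_of_mem_ascentSeqs hf
  obtain ⟨hle, -, hsucc⟩ := mem_ascentSeqs_succ.1 hf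
  have hmono : StrictMono (ascentShift D f) := by
    refine Fin.strictMono_iff_lt_succ.2 fun i => ?_
    have := hsucc i
    have := hlow i.castSucc
    have := countBelow_succ (D := D) (i + 1)
    simp only [ascentShift, Fin.val_castSucc, Fin.val_succ] at *
    split_ifs at * <;> omega
  simp only [strictSeqs, mem_filter, Fintype.mem_piFinset, mem_range]
  refine ⟨fun k => ?_, hmono⟩
  have := hmono.monotone (Fin.le_last k)
  have := hle (Fin.last n)
  have := hlow (Fin.last n)
  simp only [ascentShift, Fin.val_last, countBelow_eq_card hD] at *
  omega

lemma ascentUnshift_mem_ascentSeqs (hD : D ⊆ range (n + 1)) {h : Fin (n + 1) → ℕ}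
    (hh : h ∈ strictSeqs (n + 1) (n + 1 + t - #D)) :
    ascentUnshift D h ∈ ascentSeqs (n + 1) t D := by
  simp only [strictSeqs, mem_filter, Fintype.mem_piFinset, mem_range] at hh
  obtain ⟨hlt, hmono⟩ := hh
  have hge := Fin.val_le_of_strictMono_s1 hmono
  have hsucc (i : Fin n) : ascentUnshift D h i.castSucc + (if (i : ℕ) + 1 ∈ D then 1 else 0) ≤
      ascentUnshift D h i.succ := by
    have := hmono (Fin.castSucc_lt_succ (i := i))
    have := hge i.castSucc
    have := countBelow_succ (D := D) (i + 1)
    simp only [ascentUnshift, Fin.val_castSucc, Fin.val_succ] at *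
    split_ifs at * <;> omega
  have hmono' : Monotone (ascentUnshift D h) :=
    Fin.monotone_iff_le_succ.2 fun i => (Nat.le_add_right _ _).trans (hsucc i)
  refine mem_ascentSeqs_succ.2 ⟨fun k => ?_, by simp [ascentUnshift, countBelow_succ], hsucc⟩
  have := hmono' (Fin.le_last k)
  have := hlt (Fin.last n)
  have := hge (Fin.last n)
  simp only [ascentUnshift, Fin.val_last, countBelow_eq_card hD] at *
  omega

theorem card_ascentSeqs {d : ℕ} (hD : D ⊆ range d) :
    #(ascentSeqs d t D) = (d + t - #D).choose d := by
  rcases d with _ | n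
  · simp [ascentSeqs, subset_empty.1 hD]
  rw [← card_strictSeqs]
  refine card_nbij' (ascentShift D) (ascentUnshift D) (fun f hf => ascentShift_mem_strictSeqs hD hf)
    (fun h hh => ascentUnshift_mem_ascentSeqs hD hh) (fun f hf => ?_) (fun h hh => ?_)
  · funext k
    have := countBelow_le_of_mem_ascentSeqs hf k
    simp only [ascentShift, ascentUnshift]
    omega
  · funext k
    simp only [mem_coe, strictSeqs, mem_filter] at hh
    have := Fin.val_le_of_strictMono_s1 hh.2 k
    simp only [ascentShift, ascentUnshift]
    omega

end AscentSeqs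

section Wreath

variable {d r ℓ : ℕ}

def desLSet (d r ℓ : ℕ) (π : Equiv.Perm (Fin d)) (ε : Fin d → Fin r) : Finset ℕ :=
  wreathDes d r π ε ∪ if 1 ≤ wreathVal d π 1 ∧ wreathVal d π 1 ≤ ℓ then {0} else ∅

lemma wreathDesL_eq_card_desLSet (π : Equiv.Perm (Fin d)) (ε : Fin d → Fin r) :
    wreathDesL d r ℓ π ε = #(desLSet d r ℓ π ε) := rfl

lemma desLSet_subset_range (π : Equiv.Perm (Fin d)) (ε : Fin d → Fin r) :
    desLSet d r ℓ π ε ⊆ range d := by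
  refine union_subset (filter_subset _ _) ?_
  split_ifs with h
  · simp only [wreathVal] at h
    split_ifs at h with h' <;> simp_all
  · exact empty_subset _

lemma zero_mem_desLSet_iff {n : ℕ} {π : Equiv.Perm (Fin (n + 1))} {ε : Fin (n + 1) → Fin r} :
    0 ∈ desLSet (n + 1) r ℓ π ε ↔ 0 < (ε 0 : ℕ) ∨ (π 0 : ℕ) < ℓ := by
  simp only [desLSet, wreathDes, wreathVal, wreathCol, mem_union]
  split_ifs <;> simp_all

lemma succ_mem_desLSet_iff {n : ℕ} {π : Equiv.Perm (Fin (n + 1))} {ε : Fin (n + 1) → Fin r}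
    (i : Fin n) : (i : ℕ) + 1 ∈ desLSet (n + 1) r ℓ π ε ↔
      ε i.castSucc < ε i.succ ∨ ε i.castSucc = ε i.succ ∧ π i.succ < π i.castSucc := by
  obtain ⟨i, hi⟩ := i
  simp only [desLSet, wreathDes, wreathVal, wreathCol]
  split_ifs <;> simp [Fin.ext_iff, hi, hi.le]

def positionKey (π : Equiv.Perm (Fin d)) (ε : Fin d → Fin r) (f : Fin d → ℕ) (k : Fin d) :
    (ℕ ×ₗ (Fin r)ᵒᵈ) ×ₗ Fin d :=
  toLex (toLex (f k, toDual (ε k)), π k)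

lemma ascentStep_iff_positionKey_lt {n : ℕ} (f : Fin (n + 1) → ℕ) {π : Equiv.Perm (Fin (n + 1))}
    {ε : Fin (n + 1) → Fin r} (i : Fin n) :
    f i.castSucc + (if (i : ℕ) + 1 ∈ desLSet (n + 1) r ℓ π ε then 1 else 0) ≤ f i.succ ↔
      positionKey π ε f i.castSucc < positionKey π ε f i.succ := by
  have hne : (π i.castSucc : ℕ) ≠ π i.succ :=
    Fin.val_injective.ne (π.injective.ne (Fin.castSucc_lt_succ (i := i)).ne)
  simp only [positionKey, Prod.Lex.toLex_lt_toLex, toDual_lt_toDual, Fin.lt_def, Fin.ext_iff,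
    succ_mem_desLSet_iff, toLex_inj, Prod.mk.injEq, toDual_inj]
  split_ifs with h <;> omega

theorem mem_ascentSeqs_desLSet_iff {t : ℕ} {π : Equiv.Perm (Fin d)} {ε : Fin d → Fin r}
    {f : Fin d → ℕ} :
    f ∈ ascentSeqs d t (desLSet d r ℓ π ε) ↔
      (∀ k, f k ≤ t) ∧ StrictMono (positionKey π ε f) ∧
        ∀ k, f k = 0 → (ε k : ℕ) = 0 ∧ ℓ ≤ π k := by
  rcases d with _ | n
  · simp [ascentSeqs, Subsingleton.strictMono, eq_iff_true_of_subsingleton]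
  simp only [mem_ascentSeqs_succ, Fin.strictMono_iff_lt_succ, ascentStep_iff_positionKey_lt,
    zero_mem_desLSet_iff]
  refine and_congr_right fun _ => ⟨fun ⟨h0, hsteps⟩ => ⟨hsteps, fun k hk => ?_⟩,
    fun ⟨hsteps, hzero⟩ => ⟨?_, hsteps⟩⟩
  -- A zero of `f` lies in the initial run `f = 0`, where colors are `≤ ε 0` and letters `≥ π 0`.
  · have hmono : Monotone (positionKey π ε f) :=
      (Fin.strictMono_iff_lt_succ.2 hsteps).monotone
    have := hmono (Fin.zero_le k)
    simp only [positionKey, Prod.Lex.toLex_le_toLex, Prod.Lex.toLex_lt_toLex, toDual_lt_toDual,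
      toLex_inj, Prod.mk.injEq, toDual_inj, Fin.lt_def, Fin.le_def, Fin.ext_iff] at this
    split_ifs at h0 with h <;> omega
  · have := hzero 0
    split_ifs with h <;> omega

def lexKey (x : Fin d → ℕ × Fin r) (i : Fin d) : ℕ ×ₗ (Fin r)ᵒᵈ :=
  toLex ((x i).1, toDual (x i).2)

/-- `x i = (g, c)` stands for the coordinate `r g - c` of a point of the half-open cube
`[0, rt]^d_ℓ`, which must be positive for `i < ℓ`. -/
def coloredCells (d r t ℓ : ℕ) : Finset (Fin d → ℕ × Fin r) :=
  Fintype.piFinset fun i => {p ∈ range (t + 1) ×ˢ univ | p.1 = 0 → (p.2 : ℕ) = 0 ∧ ℓ ≤ i}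

def toColored (q : Σ _ : Equiv.Perm (Fin d) × (Fin d → Fin r), Fin d → ℕ) :
    Fin d → ℕ × Fin r :=
  fun i => (q.2 (q.1.1.symm i), q.1.2 (q.1.1.symm i))

/-- `Tuple.sort` breaks ties of `lexKey x` by the index, i.e. by the colored letter. -/
def ofColored (x : Fin d → ℕ × Fin r) : Σ _ : Equiv.Perm (Fin d) × (Fin d → Fin r), Fin d → ℕ :=
  ⟨(Tuple.sort (lexKey x), fun k => (x (Tuple.sort (lexKey x) k)).2),
    fun k => (x (Tuple.sort (lexKey x) k)).1⟩

lemma sort_lexKey_toColored {π : Equiv.Perm (Fin d)} {ε : Fin d → Fin r} {f : Fin d → ℕ}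
    (h : StrictMono (positionKey π ε f)) : Tuple.sort (lexKey (toColored ⟨(π, ε), f⟩)) = π := by
  refine (Tuple.eq_sort_iff'.2 fun i j hij => ?_).symm
  show toLex (lexKey _ (π i), π i) < toLex (lexKey _ (π j), π j)
  simpa [positionKey, lexKey, toColored] using h hij

theorem card_coloredCells_eq_sum (d r t ℓ : ℕ) :
    #(coloredCells d r t ℓ) = ∑ π, ∑ ε, #(ascentSeqs d t (desLSet d r ℓ π ε)) := by
  rw [← Fintype.sum_prod_type', ← card_sigma]
  refine card_nbij' ofColored toColored ?_ ?_ ?_ ?_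
  · intro x hx
    simp only [coloredCells, mem_coe, Fintype.mem_piFinset, mem_filter, mem_product, mem_range,
      Nat.lt_succ_iff, mem_univ, and_true] at hx
    simp only [coe_sigma, Set.mem_sigma_iff, mem_coe, mem_univ, true_and]
    refine mem_ascentSeqs_desLSet_iff.2 ⟨fun k => (hx _).1, ?_, fun k hk => (hx _).2 hk⟩
    exact (Tuple.eq_sort_iff' (f := lexKey x)).1 rfl
  · rintro ⟨⟨π, ε⟩, f⟩ hq
    simp only [coe_sigma, Set.mem_sigma_iff, mem_coe, mem_univ, true_and] at hq
    obtain ⟨hle, -, hzero⟩ := mem_ascentSeqs_desLSet_iff.1 hq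
    simp only [coloredCells, mem_coe, Fintype.mem_piFinset, mem_filter, mem_product, mem_range,
      Nat.lt_succ_iff, mem_univ, and_true]
    intro i
    have := hzero (π.symm i)
    rw [Equiv.apply_symm_apply] at this
    exact ⟨hle _, this⟩
  · intro x _
    funext i
    simp [toColored, ofColored]
  · rintro ⟨⟨π, ε⟩, f⟩ hq
    simp only [coe_sigma, Set.mem_sigma_iff, mem_coe, mem_univ, true_and] at hq
    have hsort := sort_lexKey_toColored (mem_ascentSeqs_desLSet_iff.1 hq).2.1
    simp only [ofColored, hsort]
    simp [toColored]

lemma card_coloredCell (t i : ℕ) (hr : 1 ≤ r) :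
    #{p ∈ range (t + 1) ×ˢ (univ : Finset (Fin r)) | p.1 = 0 → (p.2 : ℕ) = 0 ∧ ℓ ≤ i} =
      r * t + if ℓ ≤ i then 1 else 0 := by
  have : NeZero r := ⟨by omega⟩
  rw [card_filter, sum_product, sum_range_succ']
  split_ifs <;> simp [Fin.val_eq_zero_iff, mul_comm, *]

theorem card_coloredCells (t : ℕ) (hr : 1 ≤ r) (hℓ : ℓ ≤ d) :
    #(coloredCells d r t ℓ) = (r * t) ^ ℓ * (r * t + 1) ^ (d - ℓ) := by
  rw [coloredCells, Fintype.card_piFinset]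
  simp only [card_coloredCell t _ hr]
  rw [Fin.prod_univ_eq_prod_range (fun i => r * t + if ℓ ≤ i then 1 else 0),
    ← prod_range_mul_prod_Ico _ hℓ,
    prod_eq_pow_card (b := r * t) fun i hi => by simp [mem_range.1 hi],
    prod_eq_pow_card (b := r * t + 1) fun i hi => by simp [(mem_Ico.1 hi).1], card_range,
    Nat.card_Ico]

end Wreath

end WreathDescent

open WreathDescent

theorem pow_eq_sum_choose_wreath_descent_general (d r ℓ t : ℕ) (hr : 1 ≤ r)
    (hℓ : ℓ ≤ d) :
    (r * t) ^ ℓ * (r * t + 1) ^ (d - ℓ) =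
      ∑ π : Equiv.Perm (Fin d), ∑ ε : Fin d → Fin r,
        Nat.choose (d + t - wreathDesL d r ℓ π ε) d := by
  rw [← card_coloredCells t hr hℓ, card_coloredCells_eq_sum]
  simp only [wreathDesL_eq_card_desLSet, card_ascentSeqs (desLSet_subset_range _ _)]

/-- Finite form of Proposition 5.6: for all `d, r ≥ 1`, `0 ≤ ℓ ≤ d` and every `t ≥ 0`,
`(rt)^ℓ (rt+1)^{d-ℓ} = ∑_{(π,ε) ∈ ℤ_r ≀ S_d} binom(d + t - des_ℓ(π,ε), d)`,
where (thanks to truncated subtraction on `ℕ` and `des_ℓ ≤ d`) the binomial coefficient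
vanishes whenever `t < des_ℓ(π,ε)`. -/
theorem pow_eq_sum_choose_wreath_descent (d r ℓ t : ℕ) (hd : 1 ≤ d) (hr : 1 ≤ r)
    (hℓ : ℓ ≤ d) :
    (r * t) ^ ℓ * (r * t + 1) ^ (d - ℓ) =
      ∑ π : Equiv.Perm (Fin d), ∑ ε : Fin d → Fin r,
        Nat.choose (d + t - wreathDesL d r ℓ π ε) d :=
  pow_eq_sum_choose_wreath_descent_general d r ℓ t hr hℓ
end

section
/- For all integers d ≥ 1, r ≥ 1 and 0 ≤ ℓ ≤ d: if r = 1 and 0 ≤ ℓ < d, then the degree of A_{d,ℓ}^{(r)} is d−1; otherwise (i.e. if r ≥ 2, or r = 1 and ℓ = d), the degree of A_{d,ℓ}^{(r)} is d. (Corollary 5.7) -/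
/-!
Write `A = (1 - x)^{d+1} ∑ P(t) x^t` with `P(t) = (rt)^ℓ (rt+1)^{d-ℓ}`, a polynomial of degree
at most `d`. The coefficient of `x^n` in `A` is `∑_{i ≤ n} (-1)^i C(d+1,i) P(n-i)`. As the
`(d+1)`-st finite difference of `P` vanishes, the same sum over all `i ≤ d+1` is zero, so the
coefficients beyond `x^d` vanish, while those of `x^d` and `x^{d-1}` are the leftover terms
`(-1)^d P(-1)` and `(-1)^{d-1} ((d+1) P(-1) - P(-2))`. Finally `P(-1) = (-r)^ℓ (1-r)^{d-ℓ}`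
vanishes exactly when `r = 1` and `ℓ < d`, and then `P(-2) = (-2)^ℓ (-1)^{d-ℓ} ≠ 0`.
-/

open Polynomial PowerSeries

/-- `A` is the `r`-colored `ℓ`-Eulerian polynomial `A_{d,ℓ}^{(r)}` of the paper. -/
def IsColoredEulerian (d r ℓ : ℕ) (A : Polynomial ℝ) : Prop :=
  (A : PowerSeries ℝ) =
    (1 - PowerSeries.X) ^ (d + 1) *
      PowerSeries.mk fun t : ℕ => ((r : ℝ) * t) ^ ℓ * ((r : ℝ) * t + 1) ^ (d - ℓ)

open Finset

namespace PowerSeries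
variable {R : Type*} [CommRing R]

theorem coeff_one_sub_X_pow (m n : ℕ) :
    coeff n ((1 - X : R⟦X⟧) ^ m) = (-1) ^ n * m.choose n := by
  have : (1 - X : R⟦X⟧) ^ m = rescale (-1) (((Polynomial.X + 1) ^ m : R[X]) : R⟦X⟧) := by
    simp [rescale_X, sub_eq_neg_add]
  rw [this, coeff_rescale, Polynomial.coeff_coe, coeff_X_add_one_pow]

theorem coeff_one_sub_X_pow_mul_mk (m n : ℕ) (f : ℕ → R) :
    coeff n ((1 - X : R⟦X⟧) ^ m * mk f) =
      ∑ i ∈ range (n + 1), (-1) ^ i * m.choose i * f (n - i) := by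
  rw [coeff_mul, Nat.sum_antidiagonal_eq_sum_range_succ_mk]
  simp only [coeff_one_sub_X_pow, coeff_mk]

end PowerSeries

namespace Polynomial
variable {R : Type*} [CommRing R]

theorem sum_range_neg_one_pow_mul_choose_mul_eval_sub_eq_zero {P : R[X]} {m : ℕ}
    (hP : P.natDegree < m) (x : R) :
    ∑ i ∈ range (m + 1), (-1) ^ i * m.choose i * P.eval (x - i) = 0 := by
  have h := congr_fun (fwdDiff_iter_eq_zero_of_degree_lt hP) (x - m)
  rw [fwdDiff_iter_eq_sum_shift, ← sum_range_reflect, Pi.zero_apply] at h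
  rw [← h]
  refine sum_congr rfl fun i hi => ?_
  have hi : i ≤ m := Nat.lt_succ_iff.mp (mem_range.mp hi)
  rw [add_tsub_cancel_right, Nat.sub_sub_self hi, Nat.choose_symm hi, zsmul_eq_mul, nsmul_eq_mul,
    Nat.cast_sub hi]
  push_cast
  congr 2
  ring

theorem coeff_one_sub_X_pow_mul_mk_eval {P : R[X]} {m : ℕ} (hP : P.natDegree < m) (n : ℕ) :
    PowerSeries.coeff n ((1 - PowerSeries.X) ^ m * PowerSeries.mk fun t => P.eval (t : R)) =
      -∑ i ∈ Ico (n + 1) (m + 1), (-1) ^ i * m.choose i * P.eval ((n : R) - i) := by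
  have hsum := sum_range_neg_one_pow_mul_choose_mul_eval_sub_eq_zero hP (n : R)
  rw [coeff_one_sub_X_pow_mul_mk]
  have hcast : ∀ i ∈ range (n + 1), P.eval (((n - i : ℕ) : R)) = P.eval ((n : R) - i) :=
    fun i hi => by rw [Nat.cast_sub (Nat.lt_succ_iff.mp (mem_range.mp hi))]
  rw [sum_congr rfl fun i hi => by rw [hcast i hi]]
  rcases le_or_gt n m with hnm | hmn
  · rw [← sum_range_add_sum_Ico _ (Nat.succ_le_succ hnm)] at hsum
    exact eq_neg_of_add_eq_zero_left hsum
  · rw [Ico_eq_empty (by omega), sum_empty, neg_zero, ← hsum]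
    refine (sum_subset (range_subset_range.2 (by omega)) fun i _ hi => ?_).symm
    rw [Nat.choose_eq_zero_of_lt (by simpa using hi), Nat.cast_zero, mul_zero, zero_mul]

variable {P A : R[X]} {d : ℕ}

theorem natDegree_le_of_coe_eq_one_sub_X_pow_mul (hP : P.natDegree ≤ d)
    (hA : (A : R⟦X⟧) = (1 - PowerSeries.X) ^ (d + 1) * PowerSeries.mk fun t => P.eval (t : R)) :
    A.natDegree ≤ d := by
  refine natDegree_le_iff_coeff_eq_zero.2 fun n hn => ?_
  rw [← coeff_coe, hA, coeff_one_sub_X_pow_mul_mk_eval (Nat.lt_succ_of_le hP),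
    Ico_eq_empty (by omega), sum_empty, neg_zero]

theorem coeff_of_coe_eq_one_sub_X_pow_mul (hP : P.natDegree ≤ d)
    (hA : (A : R⟦X⟧) = (1 - PowerSeries.X) ^ (d + 1) * PowerSeries.mk fun t => P.eval (t : R)) :
    A.coeff d = (-1) ^ d * P.eval (-1) := by
  rw [← coeff_coe, hA, coeff_one_sub_X_pow_mul_mk_eval (Nat.lt_succ_of_le hP),
    sum_Ico_succ_top le_rfl, Ico_self, sum_empty, Nat.choose_self]
  push_cast
  ring_nf

theorem coeff_of_coe_eq_one_sub_X_pow_add_two_mul (hP : P.natDegree ≤ d + 1)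
    (hA : (A : R⟦X⟧) = (1 - PowerSeries.X) ^ (d + 2) * PowerSeries.mk fun t => P.eval (t : R)) :
    A.coeff d = (-1) ^ d * ((d + 2) * P.eval (-1) - P.eval (-2)) := by
  rw [← coeff_coe, hA, coeff_one_sub_X_pow_mul_mk_eval (Nat.lt_succ_of_le hP),
    sum_Ico_succ_top (by omega), sum_Ico_succ_top le_rfl, Ico_self, sum_empty, Nat.choose_self,
    Nat.choose_succ_self_right]
  push_cast
  ring_nf

end Polynomial

noncomputable def coloredEulerianSummand (d r ℓ : ℕ) : ℝ[X] :=
  ((r : ℝ[X]) * Polynomial.X) ^ ℓ * ((r : ℝ[X]) * Polynomial.X + 1) ^ (d - ℓ)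

theorem natDegree_coloredEulerianSummand_le {d r ℓ : ℕ} (hℓ : ℓ ≤ d) :
    (coloredEulerianSummand d r ℓ).natDegree ≤ d := by
  unfold coloredEulerianSummand
  compute_degree
  omega

theorem isColoredEulerian_iff {d r ℓ : ℕ} {A : ℝ[X]} :
    IsColoredEulerian d r ℓ A ↔ (A : ℝ⟦X⟧) = (1 - PowerSeries.X) ^ (d + 1) *
      PowerSeries.mk fun t => (coloredEulerianSummand d r ℓ).eval (t : ℝ) := by
  simp [IsColoredEulerian, coloredEulerianSummand]

theorem coloredEulerianSummand_eval_neg_one_eq_zero_iff {d r ℓ : ℕ} (hr : 1 ≤ r) :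
    (coloredEulerianSummand d r ℓ).eval (-1) = 0 ↔ r = 1 ∧ ℓ < d := by
  have hr0 : (r : ℝ) ≠ 0 := Nat.cast_ne_zero.2 (by omega)
  simp [coloredEulerianSummand, hr0, neg_add_eq_zero, Nat.sub_eq_zero_iff_le]

theorem coloredEulerianSummand_one_eval_neg_two_ne_zero (d ℓ : ℕ) :
    (coloredEulerianSummand d 1 ℓ).eval (-2) ≠ 0 := by
  norm_num [coloredEulerianSummand]

theorem colored_eulerian_degree_general (d r ℓ : ℕ) (hr : 1 ≤ r) (hℓ : ℓ ≤ d)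
    (A : Polynomial ℝ) (hA : IsColoredEulerian d r ℓ A) :
    (r = 1 ∧ ℓ < d → A.natDegree = d - 1) ∧
      (¬(r = 1 ∧ ℓ < d) → A.natDegree = d) := by
  have hP := natDegree_coloredEulerianSummand_le (r := r) hℓ
  rw [isColoredEulerian_iff] at hA
  have hle := natDegree_le_of_coe_eq_one_sub_X_pow_mul hP hA
  have htop := coeff_of_coe_eq_one_sub_X_pow_mul hP hA
  refine ⟨fun h => ?_, fun h => natDegree_eq_of_le_of_coeff_ne_zero hle ?_⟩
  · have hzero := (coloredEulerianSummand_eval_neg_one_eq_zero_iff hr).2 h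
    obtain ⟨rfl, hℓd⟩ := h
    obtain ⟨d, rfl⟩ : ∃ d', d = d' + 1 := ⟨d - 1, by omega⟩
    have hsub := coeff_of_coe_eq_one_sub_X_pow_add_two_mul hP hA
    rw [hzero, mul_zero, zero_sub] at hsub
    refine natDegree_eq_of_le_of_coeff_ne_zero ?_ ?_
    · simpa using natDegree_le_pred hle (by rw [htop, hzero, mul_zero])
    · simpa [hsub] using coloredEulerianSummand_one_eval_neg_two_ne_zero (d + 1) ℓ
  · rw [htop]
    exact mul_ne_zero (by simp) (mt (coloredEulerianSummand_eval_neg_one_eq_zero_iff hr).1 h)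

/-- Corollary 5.7: for `d ≥ 1`, `r ≥ 1` and `0 ≤ ℓ ≤ d`, the degree of `A_{d,ℓ}^{(r)}`
is `d - 1` if `r = 1` and `ℓ < d`, and is `d` otherwise (i.e. if `r ≥ 2`, or `r = 1`
and `ℓ = d`). -/
theorem colored_eulerian_degree (d r ℓ : ℕ) (hd : 1 ≤ d) (hr : 1 ≤ r) (hℓ : ℓ ≤ d)
    (A : Polynomial ℝ) (hA : IsColoredEulerian d r ℓ A) :
    (r = 1 ∧ ℓ < d → A.natDegree = d - 1) ∧
      (¬(r = 1 ∧ ℓ < d) → A.natDegree = d) :=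
  colored_eulerian_degree_general d r ℓ hr hℓ A hA
end

section
/- For all integers d ≥ 1, r ≥ 1 and 0 ≤ ℓ < d, the following identity of formal power series holds: (1−x)^{d+1} · ∑_{t≥1} (rt)^ℓ (rt−1)^{d−ℓ} x^t = x · I_d(A_{d,ℓ}^{(r)}). (This is the identity h*([0,r]^d_{2d−ℓ}; x) = x·I_d A_{d,ℓ}^{(r)} asserted and used in the proof of Theorem 6.6; here (rt)^ℓ(rt−1)^{d−ℓ} is the number of lattice points x ∈ ℤ^d with 0 ≤ x_i < rt for ℓ of the coordinates and 0 < x_i < rt for the remaining d−ℓ coordinates.) -/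
/-!
With `P(t) = (rt)^ℓ (rt+1)^{d-ℓ}`, a polynomial of degree at most `d`, the summand on the left is
`(-1)^d P(-t)`, so the identity is an instance of the reciprocity law for
`A = (1-x)^{d+1} ∑_{t ≥ 0} P(t) x^t`: the `n`-th coefficient of `A` is the alternating sum
`∑_i (-1)^i C(d+1,i) P(n-i)` over `i ≤ min(n, d+1)`, and the complete sums
`∑_{i ≤ d+1} (-1)^i C(d+1,i) P(y-i)` are `(d+1)`-st finite differences of `P`, hence vanish.
This gives `deg A ≤ d`; and splitting the complete sum at `y = -n` into the terms with `i < n`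
and with `i ≥ n` matches the `n`-th coefficient of `(1-x)^{d+1} ∑_{t ≥ 1} P(-t) x^t`
with `(-1)^d` times the coefficient of `x^{d+1-n}` in `A`.
-/

open Polynomial PowerSeries

open Finset

section Reciprocity

variable {R : Type*} [CommRing R]

theorem Polynomial.alternating_sum_choose_mul_eval_sub_eq_zero {P : R[X]} {m : ℕ}
    (hP : P.natDegree < m) (y : R) :
    ∑ i ∈ range (m + 1), (-1) ^ i * (m.choose i : R) * P.eval (y - i) = 0 := by
  have h := congrFun (Polynomial.fwdDiff_iter_eq_zero_of_degree_lt hP) (y - m)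
  rw [fwdDiff_iter_eq_sum_shift, Pi.zero_apply] at h
  rw [← h, ← sum_range_reflect]
  refine sum_congr rfl fun i hi => ?_
  have hi : i ≤ m := Nat.lt_succ_iff.mp (mem_range.mp hi)
  rw [Nat.add_sub_cancel, Nat.choose_symm hi, zsmul_eq_mul, nsmul_one, Nat.cast_sub hi]
  push_cast
  rw [sub_sub_eq_add_sub, add_sub_right_comm]

theorem PowerSeries.coeff_one_sub_X_pow_mul (m n : ℕ) (f : R⟦X⟧) :
    coeff n ((1 - PowerSeries.X) ^ m * f) =
      ∑ i ∈ range (m + 1), (-1) ^ i * (m.choose i : R) * if i ≤ n then coeff (n - i) f else 0 := by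
  have h : (1 - PowerSeries.X : R⟦X⟧) ^ m =
      ∑ i ∈ range (m + 1), PowerSeries.C ((-1) ^ i * (m.choose i : R)) * PowerSeries.X ^ i := by
    rw [sub_eq_add_neg, add_comm, add_pow]
    refine sum_congr rfl fun i _ => ?_
    simp only [map_mul, map_pow, map_neg, map_one, map_natCast, one_pow, mul_one]
    ring
  rw [h, sum_mul, map_sum]
  simp only [mul_assoc, coeff_C_mul, coeff_X_pow_mul']

theorem PowerSeries.coeff_succ_one_sub_X_pow_mul_mk_eval_neg (P : R[X]) (d k : ℕ) :
    coeff (k + 1) ((1 - PowerSeries.X) ^ (d + 1) *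
        PowerSeries.mk (fun t => if t = 0 then 0 else P.eval (-t : R))) =
      ∑ i ∈ range (d + 2), (-1) ^ i * ((d + 1).choose i : R) *
        if i ≤ k then P.eval ((i : R) - (k + 1 : ℕ)) else 0 := by
  rw [coeff_one_sub_X_pow_mul]
  refine sum_congr rfl fun i _ => ?_
  rw [coeff_mk]
  by_cases hik : i ≤ k
  · rw [if_pos (by omega), if_neg (by omega), if_pos hik, Nat.cast_sub (by omega), neg_sub]
  · rw [if_neg hik]
    split_ifs <;> first | omega | simp

variable {P A : R[X]} {d : ℕ}

theorem Polynomial.coeff_eq_sum_of_coe_eq_one_sub_X_pow_mul_mk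
    (hA : (A : R⟦X⟧) = (1 - PowerSeries.X) ^ (d + 1) * PowerSeries.mk fun t => P.eval (t : R))
    (j : ℕ) :
    A.coeff j = ∑ i ∈ range (d + 2),
      (-1) ^ i * ((d + 1).choose i : R) * if i ≤ j then P.eval ((j - i : ℕ) : R) else 0 := by
  rw [← Polynomial.coeff_coe, hA, coeff_one_sub_X_pow_mul]
  simp only [coeff_mk]

theorem Polynomial.coeff_eq_zero_of_coe_eq_one_sub_X_pow_mul_mk (hP : P.natDegree ≤ d)
    (hA : (A : R⟦X⟧) = (1 - PowerSeries.X) ^ (d + 1) * PowerSeries.mk fun t => P.eval (t : R))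
    {j : ℕ} (hj : d < j) : A.coeff j = 0 := by
  rw [coeff_eq_sum_of_coe_eq_one_sub_X_pow_mul_mk hA,
    ← alternating_sum_choose_mul_eval_sub_eq_zero (Nat.lt_succ_of_le hP) (j : R)]
  refine sum_congr rfl fun i hi => ?_
  have hij : i ≤ j := by grind
  rw [if_pos hij, Nat.cast_sub hij]

/-- Reciprocity for `A = (1 - X)^(d+1) ∑_{t ≥ 0} P(t) X^t` (Popoviciu, Stanley). -/
theorem PowerSeries.one_sub_X_pow_mul_mk_eval_neg (hP : P.natDegree ≤ d)
    (hA : (A : R⟦X⟧) = (1 - PowerSeries.X) ^ (d + 1) * PowerSeries.mk fun t => P.eval (t : R)) :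
    (1 - PowerSeries.X) ^ (d + 1) *
        PowerSeries.mk (fun t => if t = 0 then 0 else P.eval (-t : R)) =
      (-1 : R) ^ d • ((Polynomial.X * reflect d A : R[X]) : R⟦X⟧) := by
  have hPneg : (P.comp (-Polynomial.X)).natDegree < d + 1 := by
    have := Nat.mul_le_mul hP ((natDegree_neg (Polynomial.X : R[X])).trans_le natDegree_X_le)
    exact Nat.lt_succ_of_le (natDegree_comp_le.trans (by simpa using this))
  -- the complete sum for `P(-t)` at `y = k + 1`, split at `i = k`
  have hsplit (k : ℕ) : ∑ i ∈ range (d + 2), (-1) ^ i * ((d + 1).choose i : R) *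
        (if i ≤ k then P.eval ((i : R) - (k + 1 : ℕ)) else 0)
      = -∑ i ∈ range (d + 2), (-1) ^ i * ((d + 1).choose i : R) *
        (if i ≤ k then 0 else P.eval ((i : R) - (k + 1 : ℕ))) := by
    rw [eq_neg_iff_add_eq_zero, ← sum_add_distrib]
    refine (sum_congr rfl fun i _ => ?_).trans
      (alternating_sum_choose_mul_eval_sub_eq_zero hPneg ((k + 1 : ℕ) : R))
    rw [← mul_add, ite_add_ite, add_zero, zero_add, ite_self]
    simp
  ext n
  rcases n with _ | k
  · simp [coeff_one_sub_X_pow_mul]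
  rw [coeff_smul, Polynomial.coeff_coe, coeff_X_mul, coeff_reflect,
    coeff_succ_one_sub_X_pow_mul_mk_eval_neg, hsplit]
  rcases le_or_gt k d with hkd | hdk
  · rw [revAt_le hkd, coeff_eq_sum_of_coe_eq_one_sub_X_pow_mul_mk hA, ← sum_range_reflect,
      smul_eq_mul, mul_sum, ← sum_neg_distrib]
    refine sum_congr rfl fun i hi => ?_
    obtain ⟨j, hj⟩ := Nat.exists_eq_add_of_le (Nat.lt_succ_iff.mp (mem_range.mp hi))
    rw [show d + 2 - 1 - i = j by omega, ← Nat.choose_symm_of_eq_add hj]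
    have hsign : (-1 : R) ^ d * (-1) ^ i = -(-1) ^ j := by
      have e : (-1 : R) ^ d * (-1) = (-1) ^ i * (-1) ^ j := by rw [← pow_succ, hj, pow_add]
      have s : (-1 : R) ^ i * (-1) ^ i = 1 := by rw [← mul_pow, neg_one_mul, neg_neg, one_pow]
      linear_combination (-(-1 : R) ^ i) * e - (-1 : R) ^ j * s
    by_cases hjk : j ≤ k
    · rw [if_pos hjk, if_neg (by omega)]
      simp
    · rw [if_neg hjk, if_pos (by omega), show d - k - i = j - (k + 1) by omega,
        Nat.cast_sub (by omega)]
      linear_combination (-(((d + 1).choose i : R) * P.eval ((j : R) - (k + 1 : ℕ)))) * hsign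
  · rw [revAt_eq_self_of_lt hdk, coeff_eq_zero_of_coe_eq_one_sub_X_pow_mul_mk hP hA hdk,
      smul_zero, neg_eq_zero]
    refine sum_eq_zero fun i hi => ?_
    rw [if_pos (by grind), mul_zero]

end Reciprocity

theorem h_star_reciprocal_halfopen_dilated_cube_general (d r ℓ : ℕ)
    (hℓ : ℓ < d) (A : Polynomial ℝ) (hA : IsColoredEulerian d r ℓ A) :
    ((1 - PowerSeries.X : PowerSeries ℝ) ^ (d + 1) *
        PowerSeries.mk fun t : ℕ =>
          if t = 0 then 0 else ((r : ℝ) * t) ^ ℓ * ((r : ℝ) * t - 1) ^ (d - ℓ)) =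
      ((Polynomial.X * Polynomial.reflect d A : Polynomial ℝ) : PowerSeries ℝ) := by
  set P : ℝ[X] := (Polynomial.C (r : ℝ) * Polynomial.X) ^ ℓ *
    (Polynomial.C (r : ℝ) * Polynomial.X + 1) ^ (d - ℓ)
  have hP : P.natDegree ≤ d := by
    simp only [P]
    compute_degree
    omega
  have hPeval (x : ℝ) : P.eval x = (r * x) ^ ℓ * (r * x + 1) ^ (d - ℓ) := by simp [P]
  have hsign (x : ℝ) : (r * x) ^ ℓ * (r * x - 1) ^ (d - ℓ) = (-1) ^ d * P.eval (-x) := by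
    rw [hPeval, ← Nat.add_sub_cancel' hℓ.le, pow_add, Nat.add_sub_cancel_left,
      mul_mul_mul_comm, ← mul_pow, ← mul_pow]
    congr 2 <;> ring
  have hrec := one_sub_X_pow_mul_mk_eval_neg hP (by simp only [hPeval]; exact hA)
  calc _ = (-1 : ℝ) ^ d • ((1 - PowerSeries.X) ^ (d + 1) *
          PowerSeries.mk fun t => if t = 0 then 0 else P.eval (-t : ℝ)) := by
        rw [← mul_smul_comm]
        congr 1
        ext t
        simp only [coeff_mk, PowerSeries.coeff_smul, hsign, mul_ite, mul_zero, smul_eq_mul]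
    _ = _ := by rw [hrec, smul_smul, ← mul_pow, neg_one_mul, neg_neg, one_pow, one_smul]

/-- The identity `h*([0,r]^d_{2d-ℓ}; x) = x · I_d(A_{d,ℓ}^{(r)})` used in the proof of
Theorem 6.6: for `d ≥ 1`, `r ≥ 1` and `0 ≤ ℓ < d`, one has the formal power series
identity `(1-x)^{d+1} ∑_{t ≥ 1} (rt)^ℓ (rt-1)^{d-ℓ} x^t = x · I_d(A_{d,ℓ}^{(r)})`,
where `I_d(p) = x^d p(1/x)` is formalized as `Polynomial.reflect d`. -/
theorem h_star_reciprocal_halfopen_dilated_cube (d r ℓ : ℕ) (hd : 1 ≤ d) (hr : 1 ≤ r)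
    (hℓ : ℓ < d) (A : Polynomial ℝ) (hA : IsColoredEulerian d r ℓ A) :
    ((1 - PowerSeries.X : PowerSeries ℝ) ^ (d + 1) *
        PowerSeries.mk fun t : ℕ =>
          if t = 0 then 0 else ((r : ℝ) * t) ^ ℓ * ((r : ℝ) * t - 1) ^ (d - ℓ)) =
      ((Polynomial.X * Polynomial.reflect d A : Polynomial ℝ) : PowerSeries ℝ) :=
  h_star_reciprocal_halfopen_dilated_cube_general d r ℓ hℓ A hA
end

section
/- Fix an integer d ≥ 1, and let g_0, g_1, …, g_d be arbitrary real numbers (the f-vector f_{−1}, f_0, …, f_{d−1} of a (d−1)-dimensional relative Boolean cell complex C∖D). Define h_ℓ := ∑_{i=0}^{ℓ} (−1)^{ℓ−i} binom(d−i, ℓ−i) g_i for 0 ≤ ℓ ≤ d; define G_i := ∑_{m=0}^{d} g_m · Surj(m, i) for 0 ≤ i ≤ d, where Surj(m, i) is the number of surjective functions from an m-element set onto an i-element set (with Surj(0,0) = 1); and define H_k := ∑_{i=0}^{k} (−1)^{k−i} binom(d−i, k−i) G_i for 0 ≤ k ≤ d. Then ∑_{k=0}^{d} H_k x^k = ∑_{ℓ=0}^{d}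 h_ℓ · A_{d,ℓ}^{(1)}. (Lemma 5.3: h(sd(C)∖sd(D); x) = ∑_ℓ h_ℓ(C∖D) A_{d,ℓ}^{(1)}, since G_i is the number of (i−1)-faces of the barycentric subdivision.) -/
/-!
Both sides are polynomials, so it suffices to compare them as power series, and both equal
`(1 - x)^(d+1) ∑_{t ≥ 0} (∑_m g_m t^m) x^t`. The `h`-transform satisfies
`∑_k H_k x^k y^(d-k) = ∑_i G_i x^i (y - x)^(d-i)`. At `y = 1` this gives
`∑_k H_k x^k = ∑_i G_i x^i (1 - x)^(d-i) = (1 - x)^(d+1) ∑_t (∑_i G_i C(t, i)) x^t`, and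
`∑_i Surj(m, i) C(t, i) = t^m` by sorting the maps `[m] → [t]` according to their image.
At `x = t`, `y = t + 1` it gives `∑_ℓ h_ℓ t^ℓ (t + 1)^(d-ℓ) = ∑_i g_i t^i`, which is the
coefficient sequence of `(1 - x)^(-(d+1)) ∑_ℓ h_ℓ A_{d,ℓ}^{(1)}`.
-/

open Polynomial PowerSeries

/-- `Surj m i` is the number of surjective functions from an `m`-element set onto an
`i`-element set (so `Surj 0 0 = 1`). -/
noncomputable def Surj (m i : ℕ) : ℕ :=
  Nat.card {f : Fin m → Fin i // Function.Surjective f}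

open Finset

theorem surj_eq_zero_of_lt {m i : ℕ} (h : m < i) : Surj m i = 0 := by
  have : IsEmpty {f : Fin m → Fin i // Function.Surjective f} :=
    ⟨fun ⟨f, hf⟩ => by
      simpa using (Fintype.card_le_of_surjective f hf).not_gt (by simpa using h)⟩
  exact Nat.card_of_isEmpty

theorem card_surjective_eq_surj (m : ℕ) (β : Type*) [Fintype β] :
    Nat.card {f : Fin m → β // Function.Surjective f} = Surj m (Fintype.card β) :=
  Nat.card_congr <| (Equiv.arrowCongr (Equiv.refl _) (Fintype.equivFin β)).subtypeEquiv
    fun f => (Equiv.comp_surjective f _).symm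

theorem card_filter_image_eq_surj {β : Type*} [Fintype β] [DecidableEq β] (m : ℕ)
    (S : Finset β) : #{f : Fin m → β | univ.image f = S} = Surj m #S := by
  rw [← Fintype.card_coe S, ← card_surjective_eq_surj, ← Fintype.card_subtype,
    ← Nat.card_eq_fintype_card]
  symm
  refine Nat.card_congr (Equiv.ofBijective (fun g => ⟨Subtype.val ∘ g.1, ?_⟩) ⟨?_, ?_⟩)
  · ext s
    simp only [mem_image, mem_univ, true_and, Function.comp_apply]
    refine ⟨fun ⟨x, hx⟩ => hx ▸ (g.1 x).2, fun hs => ?_⟩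
    obtain ⟨x, hx⟩ := g.2 ⟨s, hs⟩
    exact ⟨x, by rw [hx]⟩
  · intro g₁ g₂ h
    exact Subtype.ext (Subtype.val_injective.comp_left (congrArg Subtype.val h))
  · rintro ⟨f, hf⟩
    have hmem : ∀ x, f x ∈ S := fun x => hf ▸ mem_image_of_mem f (mem_univ x)
    refine ⟨⟨fun x => ⟨f x, hmem x⟩, fun s => ?_⟩, rfl⟩
    obtain ⟨x, -, hx⟩ := mem_image.1 (hf ▸ s.2 : (s : β) ∈ univ.image f)
    exact ⟨x, Subtype.ext hx⟩

theorem pow_eq_sum_choose_mul_surj (m t : ℕ) :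
    t ^ m = ∑ i ∈ range (t + 1), t.choose i * Surj m i := by
  classical
  have hcard : t ^ m = #(univ : Finset (Fin m → Fin t)) := by simp
  rw [hcard,
    card_eq_sum_card_fiberwise (t := (univ : Finset (Fin t)).powerset)
      (fun f _ => mem_powerset.2 (subset_univ (univ.image f)))]
  simp only [card_filter_image_eq_surj, sum_powerset_apply_card, card_univ, Fintype.card_fin,
    smul_eq_mul]

theorem sum_surj_mul_choose_eq_pow {m n : ℕ} (hm : m ≤ n) (t : ℕ) :
    ∑ i ∈ range (n + 1), Surj m i * t.choose i = t ^ m := by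
  have hzero : ∀ i ≥ min m t + 1, Surj m i * t.choose i = 0 := fun i hi => by
    rcases le_total m t with h | h
    · rw [surj_eq_zero_of_lt (by omega), zero_mul]
    · rw [Nat.choose_eq_zero_of_lt (by omega), mul_zero]
  rw [pow_eq_sum_choose_mul_surj, eventually_constant_sum hzero (by omega)]
  simp_rw [mul_comm (t.choose _)]
  exact (eventually_constant_sum hzero (by omega)).symm

theorem sum_sum_mul_surj_mul_choose {R : Type*} [CommSemiring R] (g : ℕ → R) (d t : ℕ) :
    ∑ i ∈ range (d + 1), (∑ m ∈ range (d + 1), g m * Surj m i) * t.choose i =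
      ∑ m ∈ range (d + 1), g m * t ^ m := by
  simp_rw [sum_mul, mul_assoc]
  rw [sum_comm]
  refine sum_congr rfl fun m hm => ?_
  rw [← mul_sum]
  congr 1
  exact_mod_cast
    congrArg (Nat.cast : ℕ → R) (sum_surj_mul_choose_eq_pow (mem_range_succ_iff.1 hm) t)

section HTransform

variable {R S : Type*} [CommRing R] [CommRing S]

/-- The `h`-vector of a `(d - 1)`-dimensional complex whose `f`-vector is `f`
(`f i` counts the faces with `i` vertices). -/
def hTransform (d : ℕ) (f : ℕ → R) (k : ℕ) : R :=
  ∑ i ∈ range (k + 1), (-1) ^ (k - i) * ((d - i).choose (k - i) : R) * f i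

theorem map_hTransform (φ : R →+* S) (d : ℕ) (f : ℕ → R) (k : ℕ) :
    φ (hTransform d f k) = hTransform d (φ ∘ f) k := by
  simp [hTransform, map_sum]

theorem sum_hTransform_mul_pow_mul_pow (d : ℕ) (f : ℕ → R) (x y : R) :
    ∑ k ∈ range (d + 1), hTransform d f k * x ^ k * y ^ (d - k) =
      ∑ i ∈ range (d + 1), f i * x ^ i * (y - x) ^ (d - i) := by
  let F : ℕ → ℕ → R := fun i j =>
    f i * x ^ i * ((-x) ^ j * y ^ (d - i - j) * ((d - i).choose j : R))
  calc ∑ k ∈ range (d + 1), hTransform d f k * x ^ k * y ^ (d - k)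
      = ∑ k ∈ range (d + 1), ∑ i ∈ range (k + 1), F i (k - i) := by
        refine sum_congr rfl fun k hk => ?_
        rw [hTransform, sum_mul, sum_mul]
        refine sum_congr rfl fun i hi => ?_
        obtain ⟨j, rfl⟩ := Nat.exists_eq_add_of_le (Nat.lt_succ_iff.1 (mem_range.1 hi))
        simp only [F, Nat.add_sub_cancel_left, Nat.sub_sub]
        rw [neg_pow, pow_add]
        ring
    _ = ∑ i ∈ range (d + 1), ∑ j ∈ range (d + 1 - i), F i j := sum_range_diag_flip _ _
    _ = ∑ i ∈ range (d + 1), f i * x ^ i * (y - x) ^ (d - i) := by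
        refine sum_congr rfl fun i hi => ?_
        rw [sub_eq_neg_add, add_pow, mul_sum,
          Nat.sub_add_comm (Nat.lt_succ_iff.1 (mem_range.1 hi))]

end HTransform

@[norm_cast]
theorem Polynomial.coe_sum {R ι : Type*} [CommSemiring R] (s : Finset ι) (p : ι → R[X]) :
    ((∑ i ∈ s, p i : R[X]) : R⟦X⟧) = ∑ i ∈ s, (p i : R⟦X⟧) :=
  map_sum Polynomial.coeToPowerSeries.ringHom p s

namespace PowerSeries

variable {R : Type*} [CommRing R]

theorem sum_C_mul_mk {ι : Type*} (s : Finset ι) (c : ι → R) (f : ι → ℕ → R) :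
    ∑ k ∈ s, C (c k) * mk (f k) = mk fun t => ∑ k ∈ s, c k * f k t := by
  ext n
  simp [map_sum]

theorem one_sub_X_pow_succ_mul_mk_choose (i : ℕ) :
    (1 - X : R⟦X⟧) ^ (i + 1) * mk (fun t => (t.choose i : R)) = X ^ i := by
  have hshift :
      mk (fun t => (t.choose i : R)) = X ^ i * mk fun n => ((i + n).choose i : R) := by
    ext t
    rw [coeff_mk, coeff_X_pow_mul', coeff_mk]
    split_ifs with h
    · rw [Nat.add_sub_cancel' h]
    · rw [Nat.choose_eq_zero_of_lt (not_le.1 h), Nat.cast_zero]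
  rw [hshift, mul_left_comm, mul_comm _ (mk _), mk_add_choose_mul_one_sub_pow_eq_one, mul_one]

theorem X_pow_mul_one_sub_X_pow_eq {i d : ℕ} (hi : i ≤ d) :
    (X : R⟦X⟧) ^ i * (1 - X) ^ (d - i) =
      (1 - X) ^ (d + 1) * mk fun t => (t.choose i : R) := by
  rw [← one_sub_X_pow_succ_mul_mk_choose, show d + 1 = d - i + (i + 1) by omega, pow_add]
  ring

end PowerSeries

theorem coe_sum_C_hTransform_mul_X_pow {R : Type*} [CommRing R] (d : ℕ) (f : ℕ → R) :
    ((∑ k ∈ range (d + 1), Polynomial.C (hTransform d f k) * Polynomial.X ^ k : R[X]) :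
        R⟦X⟧) =
      (1 - PowerSeries.X) ^ (d + 1) *
        PowerSeries.mk fun t => ∑ i ∈ range (d + 1), f i * t.choose i := by
  have h := sum_hTransform_mul_pow_mul_pow d (PowerSeries.C ∘ f) PowerSeries.X 1
  simp only [← map_hTransform, one_pow, mul_one, Function.comp_apply] at h
  push_cast
  rw [h, ← PowerSeries.sum_C_mul_mk, mul_sum]
  refine sum_congr rfl fun i hi => ?_
  rw [mul_assoc, PowerSeries.X_pow_mul_one_sub_X_pow_eq (mem_range_succ_iff.1 hi)]
  ring

theorem coe_sum_C_hTransform_mul_eulerian (d : ℕ) (f : ℕ → ℝ) (A : ℕ → ℝ[X])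
    (hA : ∀ ℓ ≤ d, IsColoredEulerian d 1 ℓ (A ℓ)) :
    ((∑ ℓ ∈ range (d + 1), Polynomial.C (hTransform d f ℓ) * A ℓ : ℝ[X]) : ℝ⟦X⟧) =
      (1 - PowerSeries.X) ^ (d + 1) *
        PowerSeries.mk fun t => ∑ i ∈ range (d + 1), f i * t ^ i := by
  push_cast
  have hterm : ∀ ℓ ∈ range (d + 1),
      PowerSeries.C (hTransform d f ℓ) * (A ℓ : ℝ⟦X⟧) =
        (1 - PowerSeries.X) ^ (d + 1) * (PowerSeries.C (hTransform d f ℓ) *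
          PowerSeries.mk fun t : ℕ => (t : ℝ) ^ ℓ * ((t : ℝ) + 1) ^ (d - ℓ)) := by
    intro ℓ hℓ
    rw [hA ℓ (mem_range_succ_iff.1 hℓ)]
    simp only [Nat.cast_one, one_mul]
    ring
  rw [sum_congr rfl hterm, ← mul_sum, PowerSeries.sum_C_mul_mk]
  congr 2
  ext t
  simpa [mul_assoc] using sum_hTransform_mul_pow_mul_pow d f (t : ℝ) (t + 1)

theorem h_poly_barycentric_relative_general (d : ℕ) (g : ℕ → ℝ)
    (A : ℕ → Polynomial ℝ) (hA : ∀ ℓ ≤ d, IsColoredEulerian d 1 ℓ (A ℓ)) :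
    (∑ k ∈ Finset.range (d + 1),
        Polynomial.C
          (∑ i ∈ Finset.range (k + 1),
            (-1 : ℝ) ^ (k - i) * (Nat.choose (d - i) (k - i)) *
              (∑ m ∈ Finset.range (d + 1), g m * Surj m i)) *
          Polynomial.X ^ k) =
      ∑ ℓ ∈ Finset.range (d + 1),
        Polynomial.C
          (∑ i ∈ Finset.range (ℓ + 1),
            (-1 : ℝ) ^ (ℓ - i) * (Nat.choose (d - i) (ℓ - i)) * g i) *
          A ℓ := by
  have hsubdiv :=
    coe_sum_C_hTransform_mul_X_pow d fun i => ∑ m ∈ range (d + 1), g m * (Surj m i : ℝ)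
  simp only [sum_sum_mul_surj_mul_choose] at hsubdiv
  exact Polynomial.coe_inj.1 (hsubdiv.trans (coe_sum_C_hTransform_mul_eulerian d g A hA).symm)

/-- Lemma 5.3: let `g_0, …, g_d` be arbitrary reals (the `f`-vector of a
`(d-1)`-dimensional relative Boolean cell complex), let
`h_ℓ = ∑_{i=0}^ℓ (-1)^{ℓ-i} C(d-i, ℓ-i) g_i`, let `G_i = ∑_{m=0}^d g_m Surj(m, i)`
(the `f`-vector of the barycentric subdivision), and let
`H_k = ∑_{i=0}^k (-1)^{k-i} C(d-i, k-i) G_i`.  Then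
`∑_{k=0}^d H_k x^k = ∑_{ℓ=0}^d h_ℓ A_{d,ℓ}^{(1)}`. -/
theorem h_poly_barycentric_relative (d : ℕ) (hd : 1 ≤ d) (g : ℕ → ℝ)
    (A : ℕ → Polynomial ℝ) (hA : ∀ ℓ ≤ d, IsColoredEulerian d 1 ℓ (A ℓ)) :
    (∑ k ∈ Finset.range (d + 1),
        Polynomial.C
          (∑ i ∈ Finset.range (k + 1),
            (-1 : ℝ) ^ (k - i) * (Nat.choose (d - i) (k - i)) *
              (∑ m ∈ Finset.range (d + 1), g m * Surj m i)) *
          Polynomial.X ^ k) =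
      ∑ ℓ ∈ Finset.range (d + 1),
        Polynomial.C
          (∑ i ∈ Finset.range (ℓ + 1),
            (-1 : ℝ) ^ (ℓ - i) * (Nat.choose (d - i) (ℓ - i)) * g i) *
          A ℓ :=
  h_poly_barycentric_relative_general d g A hA
end

section
/- For all integers d ≥ 1 and 0 ≤ ℓ ≤ d, the following identity of formal power series holds: (1−x)^{d+1} · ∑_{t≥0} t^ℓ (t+1)^{d−ℓ} x^t = ∑_{π ∈ S_d} x^{des_ℓ(π)}, where for a permutation π of {1,…,d}, des_ℓ(π) := #{ j ∈ {1,…,d−1} : π(j) > π(j+1) } + 1 if π(1) ≤ ℓ, and des_ℓ(π) := #{ j ∈ {1,…,d−1} : π(j) > π(j+1) } otherwise. (Combinatorial content of Proposition 5.4: the h-polynomial of the barycentric subdivision of the (d−1)-simplex with ℓ facets removed equals A_{d,ℓ}^{(1)}.) -/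
open Polynomial PowerSeries

/-- The value `π(i+1) ∈ {1, …, d}` of a permutation `π ∈ S_d` at the (1-based) position
`i+1`, for `0 ≤ i < d` (and `0` for out-of-range indices). -/
def permVal (d : ℕ) (π : Equiv.Perm (Fin d)) (i : ℕ) : ℕ :=
  if h : i < d then ((π ⟨i, h⟩ : Fin d) : ℕ) + 1 else 0

/-- The `ℓ`-descent statistic of a permutation `π ∈ S_d`:
`des_ℓ(π) = #{j ∈ {1, …, d-1} : π(j) > π(j+1)}`, plus `1` if `π(1) ≤ ℓ`. -/
def permDesL (d ℓ : ℕ) (π : Equiv.Perm (Fin d)) : ℕ :=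
  ((Finset.range (d - 1)).filter fun j => permVal d π (j + 1) < permVal d π j).card +
    (if permVal d π 0 ≤ ℓ then 1 else 0)

/-!
A function `f : {1, …, d} → {0, …, t}` with `f j ≥ 1` for `j ≤ ℓ` (there are
`t^ℓ (t+1)^(d-ℓ)` of them) is determined by its stable sorting permutation `π` together with the
weakly increasing sequence `g = f ∘ π`; the pairs `(π, g)` that arise are exactly those in which
`g` increases strictly at every descent of `π` and `g 1 ≥ 1` when `π 1 ≤ ℓ` (Stanley's
`π`-compatible functions). Subtracting from `g` the number of these forced increments up to each
position leaves an arbitrary weakly increasing sequence bounded by `t - des_ℓ π`, so there are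
`C(d + t - des_ℓ π, d)` such `g`. Hence `t^ℓ (t+1)^(d-ℓ) = ∑_π C(d + t - des_ℓ π, d)`, which is the
coefficient of `x^t` in `(1 - x)^(-(d+1)) ∑_π x^(des_ℓ π)`.
-/

open Finset

theorem PowerSeries.one_sub_X_pow_mul_mk_eq_sum_X_pow {R ι : Type*} [CommRing R]
    (s : Finset ι) (k : ι → ℕ) (d : ℕ) {f : ℕ → R}
    (hf : ∀ t, f t = ∑ i ∈ s, if k i ≤ t then ((d + (t - k i)).choose d : R) else 0) :
    (1 - X) ^ (d + 1) * mk f = ∑ i ∈ s, X ^ k i := by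
  have hmk : mk f = (invOneSubPow R (d + 1)).val * ∑ i ∈ s, X ^ k i := by
    ext t
    simp [hf, mul_sum, invOneSubPow_val_succ_eq_mk_add_choose, coeff_mul_X_pow']
  rw [hmk, ← mul_assoc, ← invOneSubPow_inv_eq_one_sub_pow, Units.inv_val, one_mul]

theorem card_filter_pos_of_lt {d ℓ : ℕ} (t : ℕ) (hℓ : ℓ ≤ d) :
    #{f ∈ Fintype.piFinset fun _ : Fin d => range (t + 1) |
        ∀ j : Fin d, (j : ℕ) < ℓ → 0 < f j} = t ^ ℓ * (t + 1) ^ (d - ℓ) := by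
  have : {f ∈ Fintype.piFinset fun _ : Fin d => range (t + 1) |
        ∀ j : Fin d, (j : ℕ) < ℓ → 0 < f j} =
      Fintype.piFinset fun j : Fin d => if (j : ℕ) < ℓ then Icc 1 t else range (t + 1) := by
    ext f
    simp only [mem_filter, Fintype.mem_piFinset, ← forall_and]
    refine forall_congr' fun j => ?_
    split_ifs <;> simp <;> omega
  rw [this]
  simp only [Fintype.card_piFinset, apply_ite card, Nat.card_Icc, card_range, prod_ite,
    prod_const, Fin.card_filter_val_lt, filter_not, card_univ_sdiff, Fintype.card_fin,
    min_eq_right hℓ, Nat.add_sub_cancel]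

theorem card_filter_strictMono (d N : ℕ) :
    #{h ∈ Fintype.piFinset fun _ : Fin d => range N | StrictMono h} = N.choose d := by
  refine (card_bij (t := powersetCard d (range N)) (fun h _ => univ.image h) (fun h hh => ?_)
    (fun h₁ hh₁ h₂ hh₂ he => ?_) fun s hs => ?_).trans (by simp)
  · simp only [mem_filter, Fintype.mem_piFinset] at hh
    rw [mem_powersetCard, card_image_of_injective _ hh.2.injective, card_univ, Fintype.card_fin]
    exact ⟨image_subset_iff.2 fun i _ => hh.1 i, rfl⟩
  · simp only [mem_filter] at hh₁ hh₂
    have hcard : #(univ.image h₁) = d := by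
      rw [card_image_of_injective _ hh₁.2.injective, card_univ, Fintype.card_fin]
    exact (orderEmbOfFin_unique hcard (fun i => mem_image_of_mem h₁ (mem_univ i)) hh₁.2).trans
      (orderEmbOfFin_unique hcard (fun i => he ▸ mem_image_of_mem h₂ (mem_univ i)) hh₂.2).symm
  · obtain ⟨hsub, hcard⟩ := mem_powersetCard.1 hs
    refine ⟨s.orderEmbOfFin hcard, ?_, image_orderEmbOfFin_univ s hcard⟩
    simp only [mem_filter, Fintype.mem_piFinset]
    exact ⟨fun i => hsub (orderEmbOfFin_mem s hcard i), (s.orderEmbOfFin hcard).strictMono⟩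

theorem card_filter_monotone_sub {n t : ℕ} (s : Fin (n + 1) → ℕ) (hs : Monotone s)
    (ht : s (Fin.last n) ≤ t) :
    #{g ∈ Fintype.piFinset fun _ : Fin (n + 1) => range (t + 1) |
        (∀ i, s i ≤ g i) ∧ Monotone fun i => g i - s i} =
      #{b ∈ Fintype.piFinset fun _ : Fin (n + 1) => range (t - s (Fin.last n) + 1) |
        Monotone b} := by
  refine card_nbij' (fun g i => g i - s i) (fun b i => b i + s i) (fun g hg => ?_)
    (fun b hb => ?_) (fun g hg => ?_) fun b _ => ?_
  · simp only [coe_filter, Fintype.mem_piFinset, mem_range, Set.mem_ofPred_eq] at hg ⊢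
    obtain ⟨hgt, hsg, hm⟩ := hg
    refine ⟨fun i => ?_, hm⟩
    have : g i - s i ≤ g (Fin.last n) - s (Fin.last n) := hm (Fin.le_last i)
    have := hgt (Fin.last n)
    have := hsg (Fin.last n)
    omega
  · simp only [coe_filter, Fintype.mem_piFinset, mem_range, Set.mem_ofPred_eq,
      Nat.add_sub_cancel] at hb ⊢
    refine ⟨fun i => ?_, fun i => Nat.le_add_left _ _, hb.2⟩
    have := hb.1 i
    have := hs (Fin.le_last i)
    omega
  · simp only [coe_filter, Set.mem_ofPred_eq] at hg
    funext i
    exact Nat.sub_add_cancel (hg.2.1 i)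
  · funext i
    exact Nat.add_sub_cancel _ _

theorem strictMono_iff_monotone_sub_val {n : ℕ} {h : Fin (n + 1) → ℕ} :
    StrictMono h ↔
      (∀ i : Fin (n + 1), (i : ℕ) ≤ h i) ∧ Monotone fun i : Fin (n + 1) => h i - i := by
  rw [Fin.strictMono_iff_lt_succ, Fin.monotone_iff_le_succ]
  constructor
  · intro hstep
    refine ⟨fun i => ?_, fun i => ?_⟩
    · induction i using Fin.induction with
      | zero => exact Nat.zero_le _
      | succ i ih =>
        have := hstep i
        rw [Fin.val_succ]
        rw [Fin.val_castSucc] at ih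
        omega
    · have := hstep i
      rw [Fin.val_castSucc, Fin.val_succ]
      omega
  · rintro ⟨hle, hm⟩ i
    have : h i.castSucc - i ≤ h i.succ - (i + 1) := hm i
    have : (i : ℕ) + 1 ≤ h i.succ := hle i.succ
    omega

theorem card_filter_monotone (n m : ℕ) :
    #{b ∈ Fintype.piFinset fun _ : Fin (n + 1) => range (m + 1) | Monotone b} =
      (n + 1 + m).choose (n + 1) := by
  -- stars and bars: `b ↦ b + id` makes monotone maps strictly monotone
  have hshift := card_filter_monotone_sub (t := m + n) (fun i : Fin (n + 1) => (i : ℕ))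
    Fin.val_strictMono.monotone (by simp)
  simp only [Fin.val_last, Nat.add_sub_cancel] at hshift
  rw [← hshift, ← filter_congr fun h _ => strictMono_iff_monotone_sub_val,
    card_filter_strictMono]
  congr 1
  omega

section Descents

variable {α : Type*} [LinearOrder α] (a : ℕ → α)

def descentsBelow (n : ℕ) : ℕ :=
  #{j ∈ range n | a (j + 1) < a j}

theorem descentsBelow_succ (n : ℕ) :
    descentsBelow a (n + 1) = descentsBelow a n + if a (n + 1) < a n then 1 else 0 := by
  unfold descentsBelow
  rw [range_add_one, filter_insert]
  split_ifs
  · exact card_insert_of_notMem (by simp)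
  · rfl

theorem monotone_descentsBelow : Monotone (descentsBelow a) :=
  fun _ _ h => card_le_card (filter_subset_filter _ (range_subset_range.2 h))

theorem descentsBelow_lt_of_lt {i j : ℕ} (hij : i < j) (h : a j < a i) :
    descentsBelow a i < descentsBelow a j := by
  induction j, hij using Nat.le_induction with
  | base => rw [descentsBelow_succ, if_pos h]; omega
  | succ j hij ih =>
    rw [descentsBelow_succ]
    by_cases hj : a j < a i
    · have := ih hj
      omega
    · rw [if_pos (h.trans_le (not_lt.1 hj))]
      have := monotone_descentsBelow a (show i ≤ j by omega)
      omega

end Descents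

section DesL

variable {d : ℕ} (ℓ : ℕ) (π : Equiv.Perm (Fin d))

theorem permVal_val (i : Fin d) : permVal d π i = π i + 1 := by
  simp [permVal]

def desLBelow (i : ℕ) : ℕ :=
  descentsBelow (permVal d π) i + if permVal d π 0 ≤ ℓ then 1 else 0

theorem desLBelow_pred : desLBelow ℓ π (d - 1) = permDesL d ℓ π := rfl

theorem desLBelow_succ (i : ℕ) :
    desLBelow ℓ π (i + 1) =
      desLBelow ℓ π i + if permVal d π (i + 1) < permVal d π i then 1 else 0 := by
  unfold desLBelow
  rw [descentsBelow_succ]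
  omega

theorem monotone_desLBelow : Monotone (desLBelow ℓ π) :=
  fun _ _ h => Nat.add_le_add_right (monotone_descentsBelow _ h) _

theorem desLBelow_lt_of_lt {i j : Fin d} (hij : i < j) (h : π j < π i) :
    desLBelow ℓ π i < desLBelow ℓ π j := by
  have := descentsBelow_lt_of_lt (permVal d π) hij (by simpa [permVal_val] using h)
  unfold desLBelow
  omega

theorem desLBelow_pos {i : Fin d} (h : (π i : ℕ) < ℓ) : 0 < desLBelow ℓ π i := by
  by_cases h0 : permVal d π 0 ≤ ℓ
  · simp [desLBelow, h0]
  · have hi : permVal d π i < permVal d π 0 := by rw [permVal_val]; omega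
    have hpos : 0 < (i : ℕ) := Nat.pos_of_ne_zero fun h' => by rw [h'] at hi; omega
    have := descentsBelow_lt_of_lt _ hpos hi
    unfold desLBelow
    omega

end DesL

theorem permVal_succ_lt_iff {n : ℕ} (π : Equiv.Perm (Fin (n + 1))) (i : Fin n) :
    permVal (n + 1) π (i + 1) < permVal (n + 1) π i ↔ π i.succ < π i.castSucc := by
  rw [← Fin.val_succ, ← Fin.val_castSucc i, permVal_val, permVal_val, Fin.lt_def]
  omega

def IsCompatible {d : ℕ} (ℓ : ℕ) (π : Equiv.Perm (Fin d)) (g : Fin d → ℕ) : Prop :=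
  Monotone g ∧ (∀ i j, i < j → g i = g j → π i < π j) ∧ ∀ i, (π i : ℕ) < ℓ → 0 < g i

instance {d : ℕ} (ℓ : ℕ) (π : Equiv.Perm (Fin d)) : DecidablePred (IsCompatible ℓ π) :=
  fun _ => inferInstanceAs (Decidable (_ ∧ _ ∧ _))

theorem isCompatible_comp_iff {d ℓ : ℕ} {π : Equiv.Perm (Fin d)} {f : Fin d → ℕ} :
    IsCompatible ℓ π (f ∘ π) ↔ Tuple.sort f = π ∧ ∀ j : Fin d, (j : ℕ) < ℓ → 0 < f j := by
  rw [eq_comm, Tuple.eq_sort_iff, IsCompatible, ← and_assoc]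
  exact and_congr Iff.rfl (π.forall_congr_right (q := fun j : Fin d => (j : ℕ) < ℓ → 0 < f j))

theorem IsCompatible.apply_castSucc_add_desLBelow_succ_le {n ℓ : ℕ}
    {π : Equiv.Perm (Fin (n + 1))} {g : Fin (n + 1) → ℕ} (hg : IsCompatible ℓ π g) (i : Fin n) :
    g i.castSucc + desLBelow ℓ π (i + 1) ≤ g i.succ + desLBelow ℓ π i := by
  have hle := hg.1 (Fin.castSucc_le_succ i)
  rw [desLBelow_succ]
  split_ifs with hdes
  · have hne : g i.castSucc ≠ g i.succ := fun he =>
      ((permVal_succ_lt_iff π i).1 hdes).not_gt (hg.2.1 _ _ Fin.castSucc_lt_succ he)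
    have := lt_of_le_of_ne hle hne
    omega
  · omega

theorem IsCompatible.desLBelow_zero_le {n ℓ : ℕ} {π : Equiv.Perm (Fin (n + 1))}
    {g : Fin (n + 1) → ℕ} (hg : IsCompatible ℓ π g) : desLBelow ℓ π 0 ≤ g 0 := by
  by_cases h0 : permVal (n + 1) π 0 ≤ ℓ
  · have := hg.2.2 0 (by simpa [permVal] using h0)
    simp only [desLBelow, descentsBelow, range_zero, filter_empty, card_empty, if_pos h0]
    omega
  · simp [desLBelow, descentsBelow, h0]

theorem isCompatible_iff {n ℓ : ℕ} {π : Equiv.Perm (Fin (n + 1))} {g : Fin (n + 1) → ℕ} :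
    IsCompatible ℓ π g ↔
      (∀ i : Fin (n + 1), desLBelow ℓ π i ≤ g i) ∧
        Monotone fun i : Fin (n + 1) => g i - desLBelow ℓ π i := by
  constructor
  · intro hg
    refine ⟨fun i => ?_, Fin.monotone_iff_le_succ.2 fun i => ?_⟩
    · induction i using Fin.induction with
      | zero => exact hg.desLBelow_zero_le
      | succ i ih =>
        have := hg.apply_castSucc_add_desLBelow_succ_le i
        rw [Fin.val_castSucc] at ih
        rw [Fin.val_succ]
        omega
    · have := hg.apply_castSucc_add_desLBelow_succ_le i
      simp only [Fin.val_castSucc, Fin.val_succ]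
      omega
  · rintro ⟨hN, hm⟩
    have hshift {i j : Fin (n + 1)} (hij : i ≤ j) :
        g i + desLBelow ℓ π j ≤ g j + desLBelow ℓ π i := by
      have : g i - desLBelow ℓ π i ≤ g j - desLBelow ℓ π j := hm hij
      have := hN i
      have := hN j
      omega
    refine ⟨fun i j hij => ?_, fun i j hij he => ?_,
      fun i hi => (desLBelow_pos ℓ π hi).trans_le (hN i)⟩
    · have := hshift hij
      have := monotone_desLBelow ℓ π (Fin.le_def.1 hij)
      omega
    · by_contra hji
      have hlt := lt_of_le_of_ne (not_lt.1 hji) (π.injective.ne hij.ne')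
      have := desLBelow_lt_of_lt ℓ π hij hlt
      have := hshift hij.le
      omega

theorem card_filter_sort_eq {d ℓ : ℕ} (t : ℕ) (π : Equiv.Perm (Fin d)) :
    #{f ∈ Fintype.piFinset fun _ : Fin d => range (t + 1) |
        (∀ j : Fin d, (j : ℕ) < ℓ → 0 < f j) ∧ Tuple.sort f = π} =
      #{g ∈ Fintype.piFinset fun _ : Fin d => range (t + 1) | IsCompatible ℓ π g} := by
  refine card_nbij' (· ∘ π) (· ∘ π.symm) (fun f hf => ?_) (fun g hg => ?_) (fun f _ => ?_)
    fun g _ => ?_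
  · simp only [coe_filter, Fintype.mem_piFinset, Set.mem_ofPred_eq] at hf ⊢
    exact ⟨fun i => hf.1 (π i), isCompatible_comp_iff.2 ⟨hf.2.2, hf.2.1⟩⟩
  · simp only [coe_filter, Fintype.mem_piFinset, Set.mem_ofPred_eq] at hg ⊢
    have hc : IsCompatible ℓ π ((g ∘ π.symm) ∘ π) := by
      simpa [Function.comp_assoc] using hg.2
    obtain ⟨hsort, hpos⟩ := isCompatible_comp_iff.1 hc
    exact ⟨fun i => hg.1 (π.symm i), hpos, hsort⟩
  · simp [Function.comp_assoc]
  · simp [Function.comp_assoc]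

theorem card_filter_isCompatible {n ℓ : ℕ} (t : ℕ) (π : Equiv.Perm (Fin (n + 1))) :
    #{g ∈ Fintype.piFinset fun _ : Fin (n + 1) => range (t + 1) | IsCompatible ℓ π g} =
      if permDesL (n + 1) ℓ π ≤ t then
        (n + 1 + (t - permDesL (n + 1) ℓ π)).choose (n + 1) else 0 := by
  rw [filter_congr fun g _ => isCompatible_iff]
  have hlast : desLBelow ℓ π (Fin.last n) = permDesL (n + 1) ℓ π := desLBelow_pred ℓ π
  split_ifs with ht
  · rw [card_filter_monotone_sub (fun i => desLBelow ℓ π i)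
      (fun _ _ h => monotone_desLBelow ℓ π h) (hlast ▸ ht), hlast, card_filter_monotone]
  · refine card_eq_zero.2 (filter_eq_empty_iff.2 fun g hg ⟨hN, _⟩ => ht ?_)
    have := Fintype.mem_piFinset.1 hg (Fin.last n)
    have := hN (Fin.last n)
    rw [mem_range] at *
    omega

theorem pow_mul_succ_pow_eq_sum_choose_permDesL {n ℓ : ℕ} (t : ℕ) (hℓ : ℓ ≤ n + 1) :
    t ^ ℓ * (t + 1) ^ (n + 1 - ℓ) = ∑ π : Equiv.Perm (Fin (n + 1)),
      if permDesL (n + 1) ℓ π ≤ t then (n + 1 + (t - permDesL (n + 1) ℓ π)).choose (n + 1)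
      else 0 := by
  rw [← card_filter_pos_of_lt t hℓ,
    card_eq_sum_card_fiberwise (f := Tuple.sort) (t := univ) fun _ _ => mem_univ _]
  refine sum_congr rfl fun π _ => ?_
  rw [filter_filter, card_filter_sort_eq, card_filter_isCompatible]

/-- Combinatorial content of Proposition 5.4: for `d ≥ 1` and `0 ≤ ℓ ≤ d`, the identity
of formal power series
`(1-x)^{d+1} ∑_{t ≥ 0} t^ℓ (t+1)^{d-ℓ} x^t = ∑_{π ∈ S_d} x^{des_ℓ(π)}` holds, i.e.
`A_{d,ℓ}^{(1)}` is the generating polynomial of the `ℓ`-descent statistic over `S_d`. -/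
theorem eulerian_eq_descent_gen (d ℓ : ℕ) (hd : 1 ≤ d) (hℓ : ℓ ≤ d) :
    ((1 - PowerSeries.X : PowerSeries ℝ) ^ (d + 1) *
        PowerSeries.mk fun t : ℕ => (t : ℝ) ^ ℓ * ((t : ℝ) + 1) ^ (d - ℓ)) =
      ∑ π : Equiv.Perm (Fin d), (PowerSeries.X : PowerSeries ℝ) ^ permDesL d ℓ π := by
  obtain ⟨n, rfl⟩ : ∃ n, d = n + 1 := ⟨d - 1, by omega⟩
  refine PowerSeries.one_sub_X_pow_mul_mk_eq_sum_X_pow _ _ _ fun t => ?_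
  exact_mod_cast pow_mul_succ_pow_eq_sum_choose_permDesL t hℓ
end

section
/- For all integers d ≥ 1, r > d and 0 < ℓ ≤ d+1, the following polynomial identity holds: ((1 + x + ⋯ + x^{r−1})^{d+1} · x^ℓ)^{⟨r,0⟩} = x · ((1 + x + ⋯ + x^{r−1})^{d+1})^{⟨r, r−ℓ⟩}. (Lemma 6.2: the h-polynomial of the r-th edgewise subdivision of the d-simplex with ℓ facets removed equals x · p_{(r,d+1)}^{⟨r,r−ℓ⟩}.) -/
open Polynomial

/-- The `⟨r, i⟩`-section of a polynomial `p`: the polynomial whose coefficient of `x^m` is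
the coefficient of `x^{r·m + i}` in `p` (so that `p(x) = ∑_{i=0}^{r-1} x^i p^{⟨r,i⟩}(x^r)`
for `1 ≤ r` and `0 ≤ i < r`). -/
noncomputable def sect (r i : ℕ) (p : Polynomial ℝ) : Polynomial ℝ :=
  ∑ m ∈ Finset.range (p.natDegree + 1), Polynomial.C (p.coeff (r * m + i)) * Polynomial.X ^ m

lemma sect_coeff (r i : ℕ) (hr : 1 ≤ r) (p : Polynomial ℝ) (n : ℕ) :
    (sect r i p).coeff n = p.coeff (r * n + i) := by
  unfold sect
  rw [Polynomial.finset_sum_coeff]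
  simp only [Polynomial.coeff_C_mul, Polynomial.coeff_X_pow, mul_ite, mul_one, mul_zero]
  rw [Finset.sum_ite_eq (Finset.range (p.natDegree + 1)) n fun m => p.coeff (r * m + i)]
  split_ifs with h
  · rfl
  · symm
    apply Polynomial.coeff_eq_zero_of_natDegree_lt
    have hn : p.natDegree + 1 ≤ n := by simpa using h
    calc p.natDegree < n := hn
      _ ≤ r * n := Nat.le_mul_of_pos_left n hr
      _ ≤ r * n + i := Nat.le_add_right _ _

/-- Lemma 6.2: for `d ≥ 1`, `r > d` and `0 < ℓ ≤ d + 1`,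
`((1 + x + ⋯ + x^{r-1})^{d+1} · x^ℓ)^{⟨r,0⟩} = x · ((1 + x + ⋯ + x^{r-1})^{d+1})^{⟨r,r-ℓ⟩}`,
i.e. the `h`-polynomial of the `r`-th edgewise subdivision of the `d`-simplex with `ℓ`
facets removed equals `x · p_{(r,d+1)}^{⟨r,r-ℓ⟩}`. -/
theorem h_poly_edgewise_halfopen_simplex (d r ℓ : ℕ) (hd : 1 ≤ d) (hr : d < r)
    (hℓ0 : 0 < ℓ) (hℓ : ℓ ≤ d + 1) :
    sect r 0 ((∑ i ∈ Finset.range r, (Polynomial.X : Polynomial ℝ) ^ i) ^ (d + 1) *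
        Polynomial.X ^ ℓ) =
      Polynomial.X *
        sect r (r - ℓ) ((∑ i ∈ Finset.range r, (Polynomial.X : Polynomial ℝ) ^ i) ^ (d + 1)) := by
  have hr1 : 1 ≤ r := le_trans hd (le_of_lt hr)
  have hℓr : ℓ ≤ r := le_trans hℓ hr
  set p : Polynomial ℝ := (∑ i ∈ Finset.range r, (Polynomial.X : Polynomial ℝ) ^ i) ^ (d + 1)
  ext n
  rw [sect_coeff r 0 hr1, Polynomial.coeff_mul_X_pow', mul_comm Polynomial.X,
    ← pow_one (Polynomial.X : Polynomial ℝ), Polynomial.coeff_mul_X_pow']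
  rcases Nat.eq_zero_or_pos n with h0 | hpos
  · subst h0
    simp [Nat.not_le.mpr hℓ0]
  · rw [if_pos (Nat.one_le_iff_ne_zero.mpr (Nat.pos_iff_ne_zero.mp hpos)), sect_coeff r (r - ℓ) hr1]
    have hle : ℓ ≤ r * n + 0 := by
      have : r ≤ r * n := Nat.le_mul_of_pos_right r hpos
      omega
    rw [if_pos hle]
    congr 1
    have : r * n = r * (n - 1) + r := by
      nlinarith [Nat.sub_add_cancel hpos]
    omega
end

section
/- For all integers d ≥ 1, r > d and all nonnegative real numbers c_0, c_1, …, c_{d+1}, the polynomial c_0 · p_{(r,d+1)}^{⟨r,0⟩} + ∑_{ℓ=1}^{d+1} c_ℓ · x · p_{(r,d+1)}^{⟨r, r−ℓ⟩} has only real zeros, where p_{(r,d+1)} = (1 + x + ⋯ + x^{r−1})^{d+1}. (Analytic core of Theorem 6.3: the h-polynomial of the r-th edgewise subdivision of a d-dimensional shellable simplicial complex is such a nonnegative combination, hence real-rooted.) -/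
open Polynomial

/-- A real polynomial is real-rooted (has only real zeros) if it is identically zero or
all of its complex zeros are real. -/
def RealRooted (p : Polynomial ℝ) : Prop :=
  ∀ z ∈ (p.map (algebraMap ℝ ℂ)).roots, z.im = 0

namespace Edgewise
open Complex

lemma sect_coeff (r i : ℕ) (hr : 1 ≤ r) (p : Polynomial ℝ) (m : ℕ) :
    (sect r i p).coeff m = p.coeff (r * m + i) := by
  unfold sect
  rw [Polynomial.finset_sum_coeff]
  simp only [Polynomial.coeff_C_mul, Polynomial.coeff_X_pow, mul_ite, mul_one, mul_zero]
  rw [Finset.sum_ite_eq (Finset.range (p.natDegree + 1)) m (fun k => p.coeff (r * k + i))]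
  by_cases h : m ∈ Finset.range (p.natDegree + 1)
  · simp [h]
  · simp only [h, if_false]
    symm
    apply Polynomial.coeff_eq_zero_of_natDegree_lt
    simp only [Finset.mem_range, not_lt] at h
    have : m ≤ r * m := Nat.le_mul_of_pos_left m hr
    omega

lemma sect_ext (r i : ℕ) (hr : 1 ≤ r) (p q : Polynomial ℝ)
    (h : ∀ m, p.coeff (r * m + i) = q.coeff (r * m + i)) : sect r i p = sect r i q := by
  ext m; rw [sect_coeff r i hr, sect_coeff r i hr]; exact h m

lemma sect_sum (r i : ℕ) (hr : 1 ≤ r) {α : Type*} (s : Finset α) (f : α → Polynomial ℝ) :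
    sect r i (∑ a ∈ s, f a) = ∑ a ∈ s, sect r i (f a) := by
  ext m
  rw [sect_coeff r i hr, Polynomial.finset_sum_coeff, Polynomial.finset_sum_coeff]
  exact Finset.sum_congr rfl fun a _ => (sect_coeff r i hr (f a) m).symm

lemma sect_X_pow_r_mul (r : ℕ) (hr : 1 ≤ r) (g : Polynomial ℝ) :
    sect r 0 (X ^ r * g) = X * sect r 0 g := by
  ext m
  rw [sect_coeff r 0 hr, (Polynomial.commute_X_pow g r).eq, Polynomial.coeff_mul_X_pow']
  cases m with
  | zero => simp [hr]; omega
  | succ n =>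
    rw [Polynomial.coeff_X_mul, sect_coeff r 0 hr]
    have h1 : r ≤ r * (n + 1) + 0 := by nlinarith
    rw [if_pos h1]
    congr 1
    have : r * (n + 1) = r * n + r := by ring
    omega

lemma sect_shift (r ℓ : ℕ) (h1 : 1 ≤ ℓ) (h2 : ℓ ≤ r) (p : Polynomial ℝ) :
    X * sect r (r - ℓ) p = sect r 0 (X ^ ℓ * p) := by
  have hr : 1 ≤ r := le_trans h1 h2
  ext m
  rw [sect_coeff r 0 hr, (Polynomial.commute_X_pow p ℓ).eq, Polynomial.coeff_mul_X_pow']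
  cases m with
  | zero =>
    rw [Polynomial.mul_coeff_zero, Polynomial.coeff_X_zero, zero_mul, if_neg (by omega)]
  | succ n =>
    rw [Polynomial.coeff_X_mul, sect_coeff r _ hr]
    have hle : ℓ ≤ r * (n + 1) + 0 := by nlinarith
    rw [if_pos hle]
    congr 1
    have : r * (n + 1) = r * n + r := by ring
    omega


noncomputable def qpoly (r : ℕ) : Polynomial ℝ := ∑ i ∈ Finset.range r, X ^ i

lemma qpoly_coeff (r k : ℕ) : (qpoly r).coeff k = if k < r then 1 else 0 := by
  unfold qpoly
  rw [Polynomial.finset_sum_coeff]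
  simp only [Polynomial.coeff_X_pow]
  rw [Finset.sum_ite_eq (Finset.range r) k (fun _ => (1:ℝ))]
  simp


lemma sect_base (r ℓ : ℕ) (hr : 1 ≤ r) (hℓ : ℓ < r) :
    sect r 0 (X ^ ℓ * qpoly r ^ 1) = if ℓ = 0 then 1 else X := by
  rw [pow_one]
  ext m
  rw [sect_coeff r 0 hr, (Polynomial.commute_X_pow (qpoly r) ℓ).eq,
    Polynomial.coeff_mul_X_pow', qpoly_coeff]
  have hx : Polynomial.coeff (if ℓ = 0 then (1:ℝ[X]) else X) m
      = if (ℓ = 0 ∧ m = 0) ∨ (ℓ ≠ 0 ∧ m = 1) then 1 else 0 := by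
    by_cases h0 : ℓ = 0
    · simp [h0, Polynomial.coeff_one]
    · simp [h0, Polynomial.coeff_X, eq_comm]
  rw [hx]
  have hm1 : m = 0 ∨ m = 1 ∨ 2 ≤ m := by omega
  rcases hm1 with h | h | h
  · subst h; simp only [Nat.mul_zero]
    split_ifs <;>
      first
        | rfl
        | (exfalso
           simp only [ne_eq, and_true, and_false, or_false, false_or, true_and, not_not] at *
           omega)
  · subst h; simp only [Nat.mul_one]
    split_ifs <;>
      first
        | rfl
        | (exfalso
           simp only [ne_eq, and_true, and_false, or_false, false_or, true_and, not_not] at *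
           omega)
  · have f3 : r * 2 ≤ r * m := Nat.mul_le_mul_left r h
    split_ifs <;>
      first
        | rfl
        | (exfalso
           simp only [ne_eq, and_true, and_false, or_false, false_or, true_and, not_not] at *
           omega)

lemma sect_rec (r e ℓ : ℕ) (hr : 1 ≤ r) (hℓ : ℓ < r) :
    sect r 0 (X ^ ℓ * qpoly r ^ (e + 1)) =
      (∑ i ∈ Finset.Ico ℓ r, sect r 0 (X ^ i * qpoly r ^ e)) +
        X * ∑ i ∈ Finset.range ℓ, sect r 0 (X ^ i * qpoly r ^ e) := by
  have hle : ℓ ≤ r := hℓ.le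
  have h1 : X ^ ℓ * qpoly r ^ (e + 1) = ∑ i ∈ Finset.range r, X ^ (ℓ + i) * qpoly r ^ e := by
    rw [pow_succ, show X ^ ℓ * (qpoly r ^ e * qpoly r) = (X ^ ℓ * qpoly r) * qpoly r ^ e by ring]
    rw [show (X:ℝ[X]) ^ ℓ * qpoly r = ∑ i ∈ Finset.range r, X ^ (ℓ + i) by
      unfold qpoly
      rw [Finset.mul_sum]
      exact Finset.sum_congr rfl fun i _ => by rw [← pow_add]]
    rw [Finset.sum_mul]
  have e1 : ∑ i ∈ Finset.Ico 0 (r - ℓ), sect r 0 (X ^ (ℓ + i) * qpoly r ^ e)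
      = ∑ i ∈ Finset.Ico ℓ r, sect r 0 (X ^ i * qpoly r ^ e) := by
    rw [← Finset.range_eq_Ico]
    exact (Finset.sum_Ico_eq_sum_range (fun i => sect r 0 (X ^ i * qpoly r ^ e)) ℓ r).symm
  have e2 : ∑ i ∈ Finset.Ico (r - ℓ) r, sect r 0 (X ^ (ℓ + i) * qpoly r ^ e)
      = X * ∑ i ∈ Finset.range ℓ, sect r 0 (X ^ i * qpoly r ^ e) := by
    rw [Finset.sum_Ico_eq_sum_range, Nat.sub_sub_self hle, Finset.mul_sum]
    refine Finset.sum_congr rfl fun i hi => ?_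
    rw [show ℓ + (r - ℓ + i) = r + i by omega, pow_add, mul_assoc, sect_X_pow_r_mul r hr]
  rw [h1, sect_sum r 0 hr, Finset.range_eq_Ico,
    ← Finset.sum_Ico_consecutive _ (Nat.zero_le (r - ℓ)) (Nat.sub_le r ℓ), e1, e2,
    Finset.range_eq_Ico]


/-- `v` lies (weakly) "ahead" of `u` by an angle in `[0, arg z]`. -/
def Czrel (z u v : ℂ) : Prop :=
  0 ≤ (v * (starRingEnd ℂ) u).im ∧ 0 ≤ (z * u * (starRingEnd ℂ) v).im

lemma Czrel_self {z : ℂ} (hz : 0 ≤ z.im) (u : ℂ) : Czrel z u u := by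
  constructor
  · rw [mul_conj]; simp
  · rw [mul_assoc, mul_conj]
    simp only [Complex.mul_im, Complex.ofReal_re, Complex.ofReal_im]
    have := normSq_nonneg u
    nlinarith

lemma Czrel_sum {z : ℂ} {s t : Finset ℕ} {w : ℕ → ℂ}
    (h : ∀ i ∈ s, ∀ j ∈ t, Czrel z (w i) (w j)) :
    Czrel z (∑ i ∈ s, w i) (∑ j ∈ t, w j) := by
  constructor
  · rw [map_sum, Finset.sum_mul_sum, Complex.im_sum]
    refine Finset.sum_nonneg fun j hj => ?_
    rw [Complex.im_sum]
    exact Finset.sum_nonneg fun i hi => (h i hi j hj).1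
  · have e : z * (∑ i ∈ s, w i) * (starRingEnd ℂ) (∑ j ∈ t, w j)
        = ∑ i ∈ s, ∑ j ∈ t, z * w i * (starRingEnd ℂ) (w j) := by
      rw [map_sum, show z * (∑ i ∈ s, w i) = ∑ i ∈ s, z * w i from Finset.mul_sum _ _ _,
        Finset.sum_mul_sum]
    rw [e, Complex.im_sum]
    refine Finset.sum_nonneg fun i hi => ?_
    rw [Complex.im_sum]
    exact Finset.sum_nonneg fun j hj => (h i hi j hj).2

/-- The positive linear functional certifying nonvanishing: `λ_{w₀}(w)`. -/
def lam (z w0 w : ℂ) : ℝ := (w * (starRingEnd ℂ) w0).im + (z * w0 * (starRingEnd ℂ) w).im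

lemma lam_zero (z w0 : ℂ) : lam z w0 0 = 0 := by simp [lam]

lemma lam_add (z w0 u v : ℂ) : lam z w0 (u + v) = lam z w0 u + lam z w0 v := by
  unfold lam
  rw [map_add, mul_add, add_mul, Complex.add_im, Complex.add_im]
  ring

lemma lam_sum (z w0 : ℂ) {α : Type*} (s : Finset α) (f : α → ℂ) :
    lam z w0 (∑ i ∈ s, f i) = ∑ i ∈ s, lam z w0 (f i) := by
  unfold lam
  rw [map_sum, Finset.mul_sum, Finset.sum_mul, Complex.im_sum, Complex.im_sum,
    ← Finset.sum_add_distrib]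

lemma lam_nonneg {z w0 w : ℂ} (h : Czrel z w0 w) : 0 ≤ lam z w0 w := add_nonneg h.1 h.2

lemma lam_self (z w0 : ℂ) : lam z w0 w0 = normSq w0 * z.im := by
  unfold lam
  rw [mul_conj, mul_assoc, mul_conj]
  simp only [Complex.ofReal_im, Complex.mul_im, Complex.ofReal_re]
  ring

lemma lam_self_pos {z w0 : ℂ} (h0 : w0 ≠ 0) (hz : 0 < z.im) : 0 < lam z w0 w0 := by
  rw [lam_self]
  exact mul_pos (normSq_pos.mpr h0) hz

lemma lam_zmul_self (z w0 : ℂ) : lam z w0 (z * w0) = normSq w0 * z.im := by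
  unfold lam
  rw [mul_conj (z * w0), mul_assoc z w0, mul_conj]
  simp only [Complex.ofReal_im, Complex.mul_im, Complex.ofReal_re]
  ring

lemma lam_zmul_nonneg {z w0 w : ℂ} (h : Czrel z w w0) : 0 ≤ lam z w0 (z * w) := by
  unfold lam
  have e : z * w0 * (starRingEnd ℂ) (z * w)
      = (normSq z : ℂ) * (w0 * (starRingEnd ℂ) w) := by
    rw [map_mul, ← mul_conj]
    ring
  rw [e]
  have e2 : ((normSq z : ℂ) * (w0 * (starRingEnd ℂ) w)).im
      = normSq z * (w0 * (starRingEnd ℂ) w).im := by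
    simp [Complex.mul_im]
  rw [e2]
  exact add_nonneg h.2 (mul_nonneg (normSq_nonneg z) h.1)

lemma lam_pos {z w0 w : ℂ} (hz : 0 < z.im) (h0 : w0 ≠ 0) (h : Czrel z w0 w) (hw : w ≠ 0) :
    0 < lam z w0 w := by
  rcases (lam_nonneg h).lt_or_eq with hlt | heq
  · exact hlt
  exfalso
  have h1 : (w * (starRingEnd ℂ) w0).im = 0 := by
    have := h.1; have := h.2; unfold lam at heq; linarith
  have h2 : (z * w0 * (starRingEnd ℂ) w).im = 0 := by
    have := h.1; have := h.2; unfold lam at heq; linarith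
  set t : ℝ := (w * (starRingEnd ℂ) w0).re with ht
  have e : w * (starRingEnd ℂ) w0 = (t : ℂ) := by
    refine Complex.ext ?_ ?_
    · simp [ht]
    · simp [h1]
  have e2 : (starRingEnd ℂ) w * w0 = (t : ℂ) := by
    have := congrArg (starRingEnd ℂ) e
    simpa [map_mul, Complex.conj_conj, mul_comm] using this
  have e3 : z * w0 * (starRingEnd ℂ) w = (t : ℂ) * z := by
    rw [mul_assoc, mul_comm w0, e2]; ring
  rw [e3] at h2
  have himt : t * z.im = 0 := by
    simpa [Complex.mul_im] using h2
  have ht0 : t = 0 := by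
    rcases mul_eq_zero.mp himt with h' | h'
    · exact h'
    · exact absurd h' (ne_of_gt hz)
  rw [ht0] at e
  rcases (show w = 0 ∨ w0 = 0 by simpa using e) with h' | h'
  · exact hw h'
  · exact h0 h'

lemma key {z : ℂ} (A B Cc : ℂ) (hz : 0 ≤ z.im)
    (h1 : 0 ≤ (B * (starRingEnd ℂ) A).im) (h2 : 0 ≤ (z * A * (starRingEnd ℂ) B).im)
    (h3 : 0 ≤ (A * (starRingEnd ℂ) Cc).im) (h4 : 0 ≤ (z * Cc * (starRingEnd ℂ) A).im) :
    Czrel z (A + B + z * Cc) (B + z * (Cc + A)) := by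
  constructor
  · have hid : ((B + z * (Cc + A)) * (starRingEnd ℂ) (A + B + z * Cc)).im
        = (B * (starRingEnd ℂ) A).im + (z * Cc * (starRingEnd ℂ) A).im
          + (z * A * (starRingEnd ℂ) B).im + normSq z * (A * (starRingEnd ℂ) Cc).im
          + normSq A * z.im := by
      simp only [map_add, map_mul, Complex.add_im, Complex.add_re, Complex.mul_im,
        Complex.mul_re, Complex.conj_re, Complex.conj_im, Complex.normSq_apply]
      ring
    rw [hid]
    have t1 := mul_nonneg (normSq_nonneg z) h3
    have t2 := mul_nonneg (normSq_nonneg A) hz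
    linarith
  · have hid : (z * (A + B + z * Cc) * (starRingEnd ℂ) (B + z * (Cc + A))).im
        = (z * A * (starRingEnd ℂ) B).im + normSq z * (A * (starRingEnd ℂ) Cc).im
          + normSq z * (B * (starRingEnd ℂ) A).im
          + normSq z * (z * Cc * (starRingEnd ℂ) A).im
          + normSq (B + z * Cc) * z.im := by
      simp only [map_add, map_mul, Complex.add_im, Complex.add_re, Complex.mul_im,
        Complex.mul_re, Complex.conj_re, Complex.conj_im, Complex.normSq_apply]
      ring
    rw [hid]
    have t1 := mul_nonneg (normSq_nonneg z) h3
    have t2 := mul_nonneg (normSq_nonneg z) h1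
    have t3 := mul_nonneg (normSq_nonneg z) h4
    have t4 := mul_nonneg (normSq_nonneg (B + z * Cc)) hz
    linarith


lemma lam_real_mul (z w0 : ℂ) (a : ℝ) (w : ℂ) : lam z w0 ((a : ℂ) * w) = a * lam z w0 w := by
  unfold lam
  have e1 : (a : ℂ) * w * (starRingEnd ℂ) w0 = (a : ℂ) * (w * (starRingEnd ℂ) w0) := by ring
  have e2 : z * w0 * (starRingEnd ℂ) ((a : ℂ) * w)
      = (a : ℂ) * (z * w0 * (starRingEnd ℂ) w) := by
    rw [map_mul, Complex.conj_ofReal]; ring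
  rw [e1, e2]
  simp only [Complex.mul_im, Complex.ofReal_re, Complex.ofReal_im]
  ring

lemma invariant (r : ℕ) (hr : 1 ≤ r) (z : ℂ) (hz : 0 < z.im) :
    ∀ e, 1 ≤ e →
      (∀ ℓ, ℓ < r → Polynomial.aeval z (sect r 0 (X ^ ℓ * qpoly r ^ e)) ≠ 0) ∧
      (∀ i j, i ≤ j → j < r →
        Czrel z (Polynomial.aeval z (sect r 0 (X ^ i * qpoly r ^ e)))
          (Polynomial.aeval z (sect r 0 (X ^ j * qpoly r ^ e)))) := by
  have hz0 : z ≠ 0 := by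
    intro h; rw [h] at hz; simp at hz
  intro e he
  induction e, he using Nat.le_induction with
  | base =>
    have hv : ∀ ℓ, ℓ < r → Polynomial.aeval z (sect r 0 (X ^ ℓ * qpoly r ^ 1))
        = if ℓ = 0 then 1 else z := by
      intro ℓ hℓ
      rw [sect_base r ℓ hr hℓ]
      by_cases h : ℓ = 0 <;> simp [h]
    constructor
    · intro ℓ hℓ
      rw [hv ℓ hℓ]
      by_cases h : ℓ = 0 <;> simp [h, hz0]
    · intro i j hij hjr
      rw [hv i (lt_of_le_of_lt hij hjr), hv j hjr]
      by_cases hi : i = 0 <;> by_cases hj : j = 0 <;> simp only [hi, hj, if_true, if_false]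
      · exact Czrel_self hz.le 1
      · constructor
        · rw [map_one, mul_one]; exact hz.le
        · rw [mul_one, mul_conj]; simp
      · exact absurd (hij.trans_lt hjr) (by omega)
      · exact Czrel_self hz.le z
  | succ e he ih =>
    have hrec : ∀ ℓ, ℓ < r → Polynomial.aeval z (sect r 0 (X ^ ℓ * qpoly r ^ (e + 1)))
        = (∑ i ∈ Finset.Ico ℓ r, Polynomial.aeval z (sect r 0 (X ^ i * qpoly r ^ e)))
          + z * ∑ i ∈ Finset.range ℓ, Polynomial.aeval z (sect r 0 (X ^ i * qpoly r ^ e)) := by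
      intro ℓ hℓ
      rw [sect_rec r e ℓ hr hℓ, map_add, map_sum, map_mul, Polynomial.aeval_X, map_sum]
    obtain ⟨ihnz, ihcz⟩ := ih
    constructor
    · intro ℓ hℓ
      rw [hrec ℓ hℓ]
      intro h0
      set W : ℕ → ℂ := fun i => Polynomial.aeval z (sect r 0 (X ^ i * qpoly r ^ e)) with hW
      have hpos : 0 < lam z (W ℓ)
          ((∑ i ∈ Finset.Ico ℓ r, W i) + z * ∑ i ∈ Finset.range ℓ, W i) := by
        rw [lam_add, show z * ∑ i ∈ Finset.range ℓ, W i = ∑ i ∈ Finset.range ℓ, z * W i from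
          Finset.mul_sum _ _ _, lam_sum, lam_sum]
        have hA : ∀ i ∈ Finset.Ico ℓ r, 0 ≤ lam z (W ℓ) (W i) := fun i hi => by
          have h := Finset.mem_Ico.mp hi
          exact lam_nonneg (ihcz ℓ i h.1 h.2)
        have hB : ∀ i ∈ Finset.range ℓ, 0 ≤ lam z (W ℓ) (z * W i) := fun i hi => by
          have h := Finset.mem_range.mp hi
          exact lam_zmul_nonneg (ihcz i ℓ h.le hℓ)
        have h1 : lam z (W ℓ) (W ℓ) ≤ ∑ i ∈ Finset.Ico ℓ r, lam z (W ℓ) (W i) :=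
          Finset.single_le_sum hA (Finset.mem_Ico.mpr ⟨le_refl ℓ, hℓ⟩)
        have h2 : (0:ℝ) ≤ ∑ i ∈ Finset.range ℓ, lam z (W ℓ) (z * W i) :=
          Finset.sum_nonneg hB
        have h3 : 0 < lam z (W ℓ) (W ℓ) := lam_self_pos (ihnz ℓ hℓ) hz
        linarith
      rw [h0, lam_zero] at hpos
      exact lt_irrefl _ hpos
    · intro i j hij hjr
      have hir := lt_of_le_of_lt hij hjr
      rw [hrec i hir, hrec j hjr]
      set W : ℕ → ℂ := fun k => Polynomial.aeval z (sect r 0 (X ^ k * qpoly r ^ e)) with hW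
      have hs1 : ∑ k ∈ Finset.Ico i r, W k
          = (∑ k ∈ Finset.Ico i j, W k) + ∑ k ∈ Finset.Ico j r, W k :=
        (Finset.sum_Ico_consecutive _ hij hjr.le).symm
      have hs2 : ∑ k ∈ Finset.range j, W k
          = (∑ k ∈ Finset.range i, W k) + ∑ k ∈ Finset.Ico i j, W k := by
        rw [Finset.range_eq_Ico, ← Finset.sum_Ico_consecutive _ (Nat.zero_le i) hij,
          ← Finset.range_eq_Ico]
      rw [hs1, hs2]
      have hab : Czrel z (∑ k ∈ Finset.Ico i j, W k) (∑ k ∈ Finset.Ico j r, W k) :=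
        Czrel_sum fun a ha b hb => by
          have h1 := Finset.mem_Ico.mp ha; have h2 := Finset.mem_Ico.mp hb
          exact ihcz a b (h1.2.le.trans h2.1) h2.2
      have hca : Czrel z (∑ k ∈ Finset.range i, W k) (∑ k ∈ Finset.Ico i j, W k) :=
        Czrel_sum fun a ha b hb => by
          have h1 := Finset.mem_range.mp ha; have h2 := Finset.mem_Ico.mp hb
          exact ihcz a b (h1.le.trans h2.1) (h2.2.trans_le hjr.le)
      exact key _ _ _ hz.le hab.1 hab.2 hca.1 hca.2


lemma eval_ne (d r : ℕ) (hr : d < r) (c : ℕ → ℝ) (hc : ∀ ℓ ≤ d + 1, 0 ≤ c ℓ)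
    (ℓ₀ : ℕ) (hℓ₀ : ℓ₀ ≤ d + 1) (hℓ₀ne : c ℓ₀ ≠ 0) (z : ℂ) (hz : 0 < z.im) :
    Polynomial.aeval z
      (∑ ℓ ∈ Finset.range (d + 2), C (c ℓ) * sect r 0 (X ^ ℓ * qpoly r ^ (d + 1))) ≠ 0 := by
  have hr1 : 1 ≤ r := by omega
  obtain ⟨hnz, hcz⟩ := invariant r hr1 z hz (d + 1) (by omega)
  set w0 : ℂ := Polynomial.aeval z (sect r 0 (X ^ 0 * qpoly r ^ (d + 1))) with hw0
  have hw0ne : w0 ≠ 0 := hnz 0 (by omega)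
  have hVpos : ∀ ℓ ≤ d + 1,
      0 < lam z w0 (Polynomial.aeval z (sect r 0 (X ^ ℓ * qpoly r ^ (d + 1)))) := by
    intro ℓ hℓ
    by_cases hlr : ℓ < r
    · exact lam_pos hz hw0ne (hcz 0 ℓ (Nat.zero_le ℓ) hlr) (hnz ℓ hlr)
    · have hlre : ℓ = r := by omega
      rw [hlre]
      have hx : sect r 0 (X ^ r * qpoly r ^ (d + 1))
          = X * sect r 0 (X ^ 0 * qpoly r ^ (d + 1)) := by
        rw [pow_zero, one_mul, sect_X_pow_r_mul r hr1]
      rw [hx, map_mul, Polynomial.aeval_X, ← hw0, lam_zmul_self]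
      exact mul_pos (normSq_pos.mpr hw0ne) hz
  intro h0
  have e1 : lam z w0 (Polynomial.aeval z
      (∑ ℓ ∈ Finset.range (d + 2), C (c ℓ) * sect r 0 (X ^ ℓ * qpoly r ^ (d + 1))))
      = ∑ ℓ ∈ Finset.range (d + 2),
          c ℓ * lam z w0 (Polynomial.aeval z (sect r 0 (X ^ ℓ * qpoly r ^ (d + 1)))) := by
    rw [map_sum, lam_sum]
    refine Finset.sum_congr rfl fun ℓ hℓ => ?_
    rw [map_mul, Polynomial.aeval_C, Complex.coe_algebraMap, lam_real_mul]
  rw [h0, lam_zero] at e1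
  have e2 : 0 < ∑ ℓ ∈ Finset.range (d + 2),
      c ℓ * lam z w0 (Polynomial.aeval z (sect r 0 (X ^ ℓ * qpoly r ^ (d + 1)))) := by
    refine Finset.sum_pos' (fun ℓ hℓ => ?_) ⟨ℓ₀, Finset.mem_range.mpr (by omega), ?_⟩
    · have hle : ℓ ≤ d + 1 := by have := Finset.mem_range.mp hℓ; omega
      exact mul_nonneg (hc ℓ hle) (hVpos ℓ hle).le
    · exact mul_pos ((hc ℓ₀ hℓ₀).lt_of_ne (Ne.symm hℓ₀ne)) (hVpos ℓ₀ hℓ₀)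
  rw [← e1] at e2
  exact lt_irrefl _ e2

theorem main (d r : ℕ) (hd : 1 ≤ d) (hr : d < r)
    (c : ℕ → ℝ) (hc : ∀ ℓ ≤ d + 1, 0 ≤ c ℓ) :
    RealRooted
      (Polynomial.C (c 0) *
          sect r 0 ((∑ i ∈ Finset.range r, (Polynomial.X : Polynomial ℝ) ^ i) ^ (d + 1)) +
        ∑ ℓ ∈ Finset.Icc 1 (d + 1),
          Polynomial.C (c ℓ) *
            (Polynomial.X *
              sect r (r - ℓ)
                ((∑ i ∈ Finset.range r, (Polynomial.X : Polynomial ℝ) ^ i) ^ (d + 1)))) := by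
  have hr1 : 1 ≤ r := by omega
  have hq : (∑ i ∈ Finset.range r, (Polynomial.X : Polynomial ℝ) ^ i) = qpoly r := rfl
  rw [hq]
  set P : Polynomial ℝ := Polynomial.C (c 0) * sect r 0 (qpoly r ^ (d + 1)) +
      ∑ ℓ ∈ Finset.Icc 1 (d + 1),
        Polynomial.C (c ℓ) * (Polynomial.X * sect r (r - ℓ) (qpoly r ^ (d + 1))) with hPdef
  have hP : P = ∑ ℓ ∈ Finset.range (d + 2), C (c ℓ) * sect r 0 (X ^ ℓ * qpoly r ^ (d + 1)) := by
    rw [Finset.sum_range_succ']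
    have hterm : ∀ i ∈ Finset.range (d + 1),
        C (c (i + 1)) * sect r 0 (X ^ (i + 1) * qpoly r ^ (d + 1))
          = C (c (i + 1)) * (X * sect r (r - (i + 1)) (qpoly r ^ (d + 1))) := by
      intro i hi
      rw [sect_shift r (i + 1) (by omega) (by have := Finset.mem_range.mp hi; omega)]
    rw [Finset.sum_congr rfl hterm, hPdef]
    rw [pow_zero, one_mul]
    rw [add_comm]
    congr 1
    rw [show Finset.Icc 1 (d + 1) = Finset.Ico 1 (d + 2) from rfl]
    rw [Finset.sum_Ico_eq_sum_range]
    refine Finset.sum_congr (by congr 1) fun i hi => by rw [add_comm 1 i]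
  intro ζ hζ
  by_cases hcall : ∀ ℓ ≤ d + 1, c ℓ = 0
  · exfalso
    have hP0 : P = 0 := by
      rw [hPdef, hcall 0 (by omega), map_zero, zero_mul, zero_add]
      refine Finset.sum_eq_zero fun ℓ hℓ => ?_
      have := Finset.mem_Icc.mp hℓ
      rw [hcall ℓ this.2, map_zero, zero_mul]
    rw [hP0] at hζ
    simp at hζ
  · push_neg at hcall
    obtain ⟨ℓ₀, hℓ₀le, hℓ₀ne⟩ := hcall
    have hroot : Polynomial.aeval ζ P = 0 := by
      have := (Polynomial.mem_roots'.mp hζ).2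
      rwa [Polynomial.aeval_def, ← Polynomial.eval_map]
    by_contra him
    rcases (lt_or_gt_of_ne him) with hneg | hpos
    · have hconj : Polynomial.aeval ((starRingEnd ℂ) ζ) P = 0 := by
        have := Polynomial.aeval_algHom_apply Complex.conjAe.toAlgHom ζ P
        rw [hroot] at this
        simpa using this
      have : ((starRingEnd ℂ) ζ).im > 0 := by
        rw [Complex.conj_im]; linarith
      exact eval_ne d r hr c hc ℓ₀ hℓ₀le hℓ₀ne _ this (by rwa [← hP])
    · exact eval_ne d r hr c hc ℓ₀ hℓ₀le hℓ₀ne ζ hpos (by rwa [← hP])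


end Edgewise

open Edgewise in
/-- Analytic core of Theorem 6.3: for `d ≥ 1`, `r > d` and nonnegative reals
`c_0, …, c_{d+1}`, the polynomial
`c_0 p_{(r,d+1)}^{⟨r,0⟩} + ∑_{ℓ=1}^{d+1} c_ℓ · x · p_{(r,d+1)}^{⟨r,r-ℓ⟩}`
has only real zeros, where `p_{(r,d+1)} = (1 + x + ⋯ + x^{r-1})^{d+1}`. -/
theorem nonneg_comb_edgewise_real_rooted (d r : ℕ) (hd : 1 ≤ d) (hr : d < r)
    (c : ℕ → ℝ) (hc : ∀ ℓ ≤ d + 1, 0 ≤ c ℓ) :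
    RealRooted
      (Polynomial.C (c 0) *
          sect r 0 ((∑ i ∈ Finset.range r, (Polynomial.X : Polynomial ℝ) ^ i) ^ (d + 1)) +
        ∑ ℓ ∈ Finset.Icc 1 (d + 1),
          Polynomial.C (c ℓ) *
            (Polynomial.X *
              sect r (r - ℓ)
                ((∑ i ∈ Finset.range r, (Polynomial.X : Polynomial ℝ) ^ i) ^ (d + 1)))) := by
  have hr1 : 1 ≤ r := by omega
  have hq : (∑ i ∈ Finset.range r, (Polynomial.X : Polynomial ℝ) ^ i) = qpoly r := rfl
  rw [hq]
  set P : Polynomial ℝ := Polynomial.C (c 0) * sect r 0 (qpoly r ^ (d + 1)) +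
      ∑ ℓ ∈ Finset.Icc 1 (d + 1),
        Polynomial.C (c ℓ) * (Polynomial.X * sect r (r - ℓ) (qpoly r ^ (d + 1))) with hPdef
  have hP : P = ∑ ℓ ∈ Finset.range (d + 2), C (c ℓ) * sect r 0 (X ^ ℓ * qpoly r ^ (d + 1)) := by
    rw [Finset.sum_range_succ']
    have hterm : ∀ i ∈ Finset.range (d + 1),
        C (c (i + 1)) * sect r 0 (X ^ (i + 1) * qpoly r ^ (d + 1))
          = C (c (i + 1)) * (X * sect r (r - (i + 1)) (qpoly r ^ (d + 1))) := by
      intro i hi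
      rw [sect_shift r (i + 1) (by omega) (by have := Finset.mem_range.mp hi; omega)]
    rw [Finset.sum_congr rfl hterm, hPdef]
    rw [pow_zero, one_mul]
    rw [add_comm]
    congr 1
    rw [show Finset.Icc 1 (d + 1) = Finset.Ico 1 (d + 2) from rfl]
    rw [Finset.sum_Ico_eq_sum_range]
    refine Finset.sum_congr (by congr 1) fun i hi => by rw [add_comm 1 i]
  intro ζ hζ
  by_cases hcall : ∀ ℓ ≤ d + 1, c ℓ = 0
  · exfalso
    have hP0 : P = 0 := by
      rw [hPdef, hcall 0 (by omega), map_zero, zero_mul, zero_add]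
      refine Finset.sum_eq_zero fun ℓ hℓ => ?_
      have := Finset.mem_Icc.mp hℓ
      rw [hcall ℓ this.2, map_zero, zero_mul]
    rw [hP0] at hζ
    simp at hζ
  · push_neg at hcall
    obtain ⟨ℓ₀, hℓ₀le, hℓ₀ne⟩ := hcall
    have hroot : Polynomial.aeval ζ P = 0 := by
      have := (Polynomial.mem_roots'.mp hζ).2
      rwa [Polynomial.aeval_def, ← Polynomial.eval_map]
    by_contra him
    rcases (lt_or_gt_of_ne him) with hneg | hpos
    · have hconj : Polynomial.aeval ((starRingEnd ℂ) ζ) P = 0 := by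
        have := Polynomial.aeval_algHom_apply Complex.conjAe.toAlgHom ζ P
        rw [hroot] at this
        simpa using this
      have : ((starRingEnd ℂ) ζ).im > 0 := by
        rw [Complex.conj_im]; linarith
      exact eval_ne d r hr c hc ℓ₀ hℓ₀le hℓ₀ne _ this (by rwa [← hP])
    · exact eval_ne d r hr c hc ℓ₀ hℓ₀le hℓ₀ne ζ hpos (by rwa [← hP])
end

section
/- Let d ≥ 1 and r > d be integers, and let p ∈ ℝ[x] be a polynomial of degree at most d+1 all of whose coefficients are nonnegative. Then the polynomial ((1 + x + ⋯ + x^{r−1})^{d+1} · p)^{⟨r,0⟩} has only real zeros. (Theorem 6.4, giving a positive answer to the Mohammadi–Welker problem on edgewise subdivisions: if C is a d-dimensional simplicial complex with nonnegative h-vector, then h(C^{⟨r⟩};x) = ((1+x+⋯+x^{r−1})^{d+1} h(C;x))^{⟨r,0⟩} is real-rooted for r > d.) -/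
open Polynomial

/-!
Fix `y` with `Im y ≠ 0` and let `S_y = ℝ≥0 + ℝ≥0·y`, a salient cone. For a polynomial `q` put
`h_i = q^{⟨r,i⟩}(y)` for `i < r`. Multiplying `q` by `1 + x + ⋯ + x^{r-1}` replaces `h_i` by
`∑_{l ≤ i} h_l + y ∑_{i < l < r} h_l`, and this preserves the property `h_i · conj h_j ∈ S_y` for
all `i ≤ j < r`, which holds for `p` itself because `deg p ≤ r` and the coefficients of `p` are
nonnegative. Given this property, salience of `S_y` shows that the new `h_0` vanishes only if all
the old `h_l` vanish. Iterating back to `p`, whose sections at `y` are `p_l + p_{r+l} y`, a zero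
`y` of `((1 + ⋯ + x^{r-1})^{n+1} p)^{⟨r,0⟩}` forces `p = 0`.
-/

open Finset ComplexConjugate

section Sect

variable {r : ℕ}

theorem coeff_sect (hr : 0 < r) (i : ℕ) (q : ℝ[X]) (m : ℕ) :
    (sect r i q).coeff m = q.coeff (r * m + i) := by
  simp only [sect, finsetSum_coeff, coeff_C_mul_X_pow]
  rw [sum_ite_eq, ite_eq_left_iff]
  intro hm
  simp only [mem_range, not_lt] at hm
  exact (coeff_eq_zero_of_natDegree_lt (by nlinarith)).symm

theorem sect_sum (hr : 0 < r) (i : ℕ) {ι : Type*} (s : Finset ι) (f : ι → ℝ[X]) :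
    sect r i (∑ j ∈ s, f j) = ∑ j ∈ s, sect r i (f j) := by
  ext m
  simp only [coeff_sect hr, finsetSum_coeff]

theorem sect_X_pow_mul_of_le (hr : 0 < r) {i j : ℕ} (hji : j ≤ i) (q : ℝ[X]) :
    sect r i (X ^ j * q) = sect r (i - j) q := by
  ext m
  rw [coeff_sect hr, coeff_sect hr, coeff_X_pow_mul', if_pos (by omega)]
  congr 1
  omega

theorem sect_X_pow_mul_of_lt (hr : 0 < r) {i j : ℕ} (hij : i < j) (hj : j ≤ r + i)
    (q : ℝ[X]) : sect r i (X ^ j * q) = X * sect r (r + i - j) q := by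
  ext m
  rw [coeff_sect hr, coeff_X_pow_mul']
  rcases m with _ | m
  · simp [show ¬ j ≤ i by omega]
  · rw [coeff_X_mul, coeff_sect hr, if_pos (by nlinarith)]
    congr 1
    rw [Nat.mul_succ]
    omega

theorem sect_geomSum_mul (hr : 0 < r) {i : ℕ} (hi : i < r) (q : ℝ[X]) :
    sect r i ((∑ j ∈ range r, X ^ j) * q)
      = ∑ l ∈ range (i + 1), sect r l q + X * ∑ l ∈ Ico (i + 1) r, sect r l q := by
  have reflect := sum_Ico_reflect (fun l => X * sect r l q) (i + 1) (by omega : r ≤ r + i + 1)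
  rw [show r + i + 1 - r = i + 1 by omega, show r + i + 1 - (i + 1) = r by omega] at reflect
  rw [sum_mul, sect_sum hr, ← sum_range_add_sum_Ico _ hi, mul_sum, ← reflect,
    ← sum_range_reflect (fun l => sect r l q)]
  congr 1 <;> refine sum_congr rfl fun j hj => ?_ <;> simp only [mem_range, mem_Ico] at hj
  · rw [sect_X_pow_mul_of_le hr (by omega)]
    congr 1
  · exact sect_X_pow_mul_of_lt hr (by omega) (by omega) q

end Sect

noncomputable def sectorCone (y : ℂ) : PointedCone ℝ ℂ := PointedCone.hull ℝ {1, y}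

section SectorCone

variable {y w : ℂ}

theorem mem_sectorCone_iff : w ∈ sectorCone y ↔ ∃ a b : ℝ, 0 ≤ a ∧ 0 ≤ b ∧ w = a + b * y := by
  rw [sectorCone, PointedCone.hull, Submodule.mem_span_pair]
  constructor
  · rintro ⟨a, b, rfl⟩
    exact ⟨a, b, a.2, b.2, by simp only [← Nonneg.coe_smul, Complex.real_smul, mul_one]⟩
  · rintro ⟨a, b, ha, hb, rfl⟩
    exact ⟨⟨a, ha⟩, ⟨b, hb⟩, by simp [Nonneg.mk_smul, Complex.real_smul]⟩

theorem ofReal_mul_mem_sectorCone {c : ℝ} (hc : 0 ≤ c) (hw : w ∈ sectorCone y) :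
    (c : ℂ) * w ∈ sectorCone y := by
  simpa only [Complex.real_smul] using (sectorCone y).smul_mem hc hw

theorem ofReal_mem_sectorCone {c : ℝ} (hc : 0 ≤ c) : (c : ℂ) ∈ sectorCone y :=
  mem_sectorCone_iff.mpr ⟨c, 0, hc, le_rfl, by simp⟩

theorem self_mul_ofReal_mem_sectorCone {c : ℝ} (hc : 0 ≤ c) : y * c ∈ sectorCone y :=
  mem_sectorCone_iff.mpr ⟨0, c, le_rfl, hc, by simp [mul_comm]⟩

theorem mul_conj_self_mem_sectorCone (z : ℂ) : z * conj z ∈ sectorCone y := by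
  rw [Complex.mul_conj]
  exact ofReal_mem_sectorCone (Complex.normSq_nonneg z)

theorem mul_conj_mem_sectorCone (hw : w ∈ sectorCone y) : y * conj w ∈ sectorCone y := by
  obtain ⟨a, b, ha, hb, rfl⟩ := mem_sectorCone_iff.mp hw
  refine mem_sectorCone_iff.mpr
    ⟨b * Complex.normSq y, a, mul_nonneg hb (Complex.normSq_nonneg y), ha, ?_⟩
  simp only [map_add, map_mul, Complex.conj_ofReal, Complex.ofReal_mul, ← Complex.mul_conj]
  ring

theorem eq_zero_of_mem_sectorCone_of_neg_mem (hy : y.im ≠ 0) (hw : w ∈ sectorCone y)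
    (hw' : -w ∈ sectorCone y) : w = 0 := by
  obtain ⟨a, b, ha, hb, rfl⟩ := mem_sectorCone_iff.mp hw
  obtain ⟨a', b', ha', hb', h⟩ := mem_sectorCone_iff.mp hw'
  have him := congrArg Complex.im h
  have hre := congrArg Complex.re h
  simp only [Complex.neg_im, Complex.neg_re, Complex.add_im, Complex.add_re, Complex.mul_im,
    Complex.mul_re, Complex.ofReal_re, Complex.ofReal_im, zero_mul, add_zero, sub_zero] at him hre
  have hbb' : b + b' = 0 := by
    have : (b + b') * y.im = 0 := by linarith
    exact (mul_eq_zero.mp this).resolve_right hy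
  have hb0 : b = 0 := by linarith
  have hb'0 : b' = 0 := by linarith
  have ha0 : a = 0 := by
    subst hb0 hb'0
    linarith
  simp [ha0, hb0]

theorem eq_zero_of_sum_eq_zero_of_mem_sectorCone (hy : y.im ≠ 0) {ι : Type*} [DecidableEq ι]
    {s : Finset ι} {f : ι → ℂ} (hf : ∀ k ∈ s, f k ∈ sectorCone y) (hsum : ∑ k ∈ s, f k = 0) :
    ∀ k ∈ s, f k = 0 := by
  intro k hk
  refine eq_zero_of_mem_sectorCone_of_neg_mem hy (hf k hk) ?_
  rw [← add_sum_erase s f hk, add_eq_zero_iff_eq_neg] at hsum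
  rw [hsum, neg_neg]
  exact Submodule.sum_mem _ fun l hl => hf l (mem_of_mem_erase hl)

end SectorCone

/-- How the values `h i = q^{⟨r,i⟩}(y)`, `i < r`, change when `q` is multiplied by
`1 + x + ⋯ + x^{r-1}` (`aeval_sect_geomSum_mul`). -/
def geomSumStep (y : ℂ) (r : ℕ) (h : ℕ → ℂ) (i : ℕ) : ℂ :=
  ∑ l ∈ range (i + 1), h l + y * ∑ l ∈ Ico (i + 1) r, h l

def SectorOrdered (y : ℂ) (r : ℕ) (h : ℕ → ℂ) : Prop :=
  ∀ i j, i ≤ j → j < r → h i * conj (h j) ∈ sectorCone y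

namespace SectorOrdered

variable {y : ℂ} {r : ℕ} {h : ℕ → ℂ}

theorem congr {g : ℕ → ℂ} (hh : SectorOrdered y r h) (hgh : ∀ i < r, g i = h i) :
    SectorOrdered y r g := by
  intro i j hij hj
  rw [hgh i (by omega), hgh j hj]
  exact hh i j hij hj

theorem sum_mul_conj_sum_mem (hh : SectorOrdered y r h) {s t : Finset ℕ}
    (hst : ∀ l ∈ s, ∀ m ∈ t, l ≤ m ∧ m < r) :
    (∑ l ∈ s, h l) * conj (∑ m ∈ t, h m) ∈ sectorCone y := by
  rw [map_sum, sum_mul_sum]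
  exact Submodule.sum_mem _ fun l hl => Submodule.sum_mem _ fun m hm =>
    hh l m (hst l hl m hm).1 (hst l hl m hm).2

theorem geomSumStep (hh : SectorOrdered y r h) : SectorOrdered y r (geomSumStep y r h) := by
  intro i j hij hj
  set U := ∑ l ∈ range (i + 1), h l
  set V := ∑ l ∈ Ico (i + 1) (j + 1), h l
  set W := ∑ l ∈ Ico (j + 1) r, h l
  have hi : ∑ l ∈ Ico (i + 1) r, h l = V + W := (sum_Ico_consecutive _ (by omega) hj).symm
  have hj : ∑ l ∈ range (j + 1), h l = U + V := (sum_range_add_sum_Ico _ (by omega)).symm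
  have hUV : U * conj V ∈ sectorCone y :=
    hh.sum_mul_conj_sum_mem fun l hl m hm => by simp only [mem_range, mem_Ico] at hl hm; omega
  have hVW : V * conj W ∈ sectorCone y :=
    hh.sum_mul_conj_sum_mem fun l hl m hm => by simp only [mem_Ico] at hl hm; omega
  have expand : (U + y * (V + W)) * conj (U + V + y * W)
      = (U + y * W) * conj (U + y * W) + (Complex.normSq y : ℂ) * (V * conj W)
        + (y * (V * conj V) + (U * conj V + y * conj (U * conj V)) + y * conj (V * conj W)) := by
    simp only [← Complex.mul_conj, map_add, map_mul, Complex.conj_conj]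
    ring
  simp only [_root_.geomSumStep]
  rw [hi, hj, expand]
  refine add_mem (add_mem (mul_conj_self_mem_sectorCone _)
    (ofReal_mul_mem_sectorCone (Complex.normSq_nonneg y) hVW)) (add_mem (add_mem ?_ ?_) ?_)
  · rw [Complex.mul_conj]
    exact self_mul_ofReal_mem_sectorCone (Complex.normSq_nonneg V)
  · exact add_mem hUV (mul_conj_mem_sectorCone hUV)
  · exact mul_conj_mem_sectorCone hVW

theorem eq_zero_of_sum_eq_zero (hh : SectorOrdered y r h) (hy : y.im ≠ 0)
    (hsum : ∑ l ∈ range r, h l = 0) : ∀ l < r, h l = 0 := by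
  intro l
  induction l using Nat.strong_induction_on with
  | _ l ih =>
  intro hl
  have hterms : ∀ m ∈ range r, h l * conj (h m) ∈ sectorCone y := by
    intro m hm
    rcases lt_or_ge m l with hml | hlm
    · rw [ih m hml (by omega), map_zero, mul_zero]
      exact zero_mem _
    · exact hh l m hlm (mem_range.mp hm)
  have hterms_sum : ∑ m ∈ range r, h l * conj (h m) = 0 := by
    rw [← mul_sum, ← map_sum, hsum, map_zero, mul_zero]
  have := eq_zero_of_sum_eq_zero_of_mem_sectorCone hy hterms hterms_sum l (mem_range.mpr hl)
  rwa [Complex.mul_conj, Complex.ofReal_eq_zero, Complex.normSq_eq_zero] at this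

theorem eq_zero_of_geomSumStep_eq_zero (hh : SectorOrdered y r h) (hy : y.im ≠ 0) (hr : 0 < r)
    (hstep : _root_.geomSumStep y r h 0 = 0) : ∀ l < r, h l = 0 := by
  set Q := ∑ l ∈ Ico 1 r, h l
  have hh0 : h 0 = -(y * Q) := by
    simpa [_root_.geomSumStep, add_eq_zero_iff_eq_neg] using hstep
  have hcone : h 0 * conj Q ∈ sectorCone y := by
    simpa only [sum_range_one] using hh.sum_mul_conj_sum_mem (s := range 1) (t := Ico 1 r)
      fun l hl m hm => by simp only [mem_range, mem_Ico] at hl hm; omega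
  have hQ : Q = 0 := by
    have hyQ : y * (Complex.normSq Q : ℂ) = 0 := by
      refine eq_zero_of_mem_sectorCone_of_neg_mem hy
        (self_mul_ofReal_mem_sectorCone (Complex.normSq_nonneg Q)) ?_
      convert hcone using 1
      rw [hh0, ← Complex.mul_conj]
      ring
    have hy0 : y ≠ 0 := fun h => hy (by simp [h])
    simpa [hy0] using hyQ
  refine hh.eq_zero_of_sum_eq_zero hy ?_
  rw [range_eq_Ico, sum_eq_sum_Ico_succ_bot hr, hh0, hQ, mul_zero, neg_zero, zero_add]
  exact hQ

end SectorOrdered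

section SectionValues

variable {r : ℕ} {y : ℂ}

theorem aeval_sect_geomSum_mul (hr : 0 < r) {i : ℕ} (hi : i < r) (q : ℝ[X]) :
    aeval y (sect r i ((∑ j ∈ range r, X ^ j) * q))
      = geomSumStep y r (fun l => aeval y (sect r l q)) i := by
  rw [sect_geomSum_mul hr hi, geomSumStep, map_add, map_mul, aeval_X, map_sum, map_sum]

theorem sect_of_natDegree_le (hr : 0 < r) {p : ℝ[X]} (hdeg : p.natDegree ≤ r) (l : ℕ) :
    sect r l p = C (p.coeff l) + C (p.coeff (r + l)) * X := by
  ext m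
  rw [coeff_sect hr, coeff_add, coeff_C, coeff_C_mul, coeff_X]
  rcases m with _ | _ | m
  · simp
  · simp [mul_comm]
  · rw [coeff_eq_zero_of_natDegree_lt (by nlinarith), if_neg (by omega), if_neg (by omega),
      mul_zero, add_zero]

theorem aeval_sect_of_natDegree_le (hr : 0 < r) {p : ℝ[X]} (hdeg : p.natDegree ≤ r) (l : ℕ) :
    aeval y (sect r l p) = p.coeff l + p.coeff (r + l) * y := by
  simp [sect_of_natDegree_le hr hdeg]

theorem sectorOrdered_aeval_sect (hr : 0 < r) {p : ℝ[X]} (hdeg : p.natDegree ≤ r)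
    (hcoeff : ∀ k, 0 ≤ p.coeff k) : SectorOrdered y r fun l => aeval y (sect r l p) := by
  intro i j hij hj
  rcases Nat.eq_zero_or_pos j with rfl | hj0
  · obtain rfl : i = 0 := by omega
    exact mul_conj_self_mem_sectorCone _
  · have htop : p.coeff (r + j) = 0 := coeff_eq_zero_of_natDegree_lt (by omega)
    simp only [aeval_sect_of_natDegree_le hr hdeg, htop, Complex.ofReal_zero, zero_mul,
      add_zero, Complex.conj_ofReal]
    refine mem_sectorCone_iff.mpr ⟨p.coeff i * p.coeff j, p.coeff (r + i) * p.coeff j,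
      mul_nonneg (hcoeff _) (hcoeff _), mul_nonneg (hcoeff _) (hcoeff _), ?_⟩
    push_cast
    ring

theorem eq_zero_of_forall_aeval_sect_eq_zero (hr : 0 < r) {p : ℝ[X]} (hdeg : p.natDegree ≤ r)
    (hy : y.im ≠ 0) (hzero : ∀ l < r, aeval y (sect r l p) = 0) : p = 0 := by
  have hcoeff : ∀ l < r, p.coeff l = 0 ∧ p.coeff (r + l) = 0 := by
    intro l hl
    have h := hzero l hl
    rw [aeval_sect_of_natDegree_le hr hdeg] at h
    have htop : p.coeff (r + l) = 0 := by
      simpa [hy] using congrArg Complex.im h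
    refine ⟨?_, htop⟩
    simpa [htop] using h
  ext k
  rw [coeff_zero]
  rcases lt_trichotomy k r with hk | rfl | hk
  · exact (hcoeff k hk).1
  · simpa using (hcoeff 0 hr).2
  · exact coeff_eq_zero_of_natDegree_lt (by omega)

end SectionValues

section GeomSumPow

variable {r : ℕ} {y : ℂ} {p : ℝ[X]}

theorem sectorOrdered_aeval_sect_geomSum_pow_mul (hr : 0 < r) (hdeg : p.natDegree ≤ r)
    (hcoeff : ∀ k, 0 ≤ p.coeff k) (n : ℕ) :
    SectorOrdered y r fun l => aeval y (sect r l ((∑ j ∈ range r, X ^ j) ^ n * p)) := by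
  induction n with
  | zero => simpa using sectorOrdered_aeval_sect hr hdeg hcoeff
  | succ n ih =>
    refine ih.geomSumStep.congr fun i hi => ?_
    rw [pow_succ', mul_assoc, aeval_sect_geomSum_mul hr hi]

theorem eq_zero_of_aeval_sect_zero_geomSum_pow_succ_mul_eq_zero (hr : 0 < r)
    (hdeg : p.natDegree ≤ r) (hcoeff : ∀ k, 0 ≤ p.coeff k) (hy : y.im ≠ 0) (n : ℕ)
    (hzero : aeval y (sect r 0 ((∑ j ∈ range r, X ^ j) ^ (n + 1) * p)) = 0) : p = 0 := by
  have hsections : ∀ n, aeval y (sect r 0 ((∑ j ∈ range r, X ^ j) ^ (n + 1) * p)) = 0 →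
      ∀ l < r, aeval y (sect r l ((∑ j ∈ range r, X ^ j) ^ n * p)) = 0 := by
    intro n hn
    rw [pow_succ', mul_assoc, aeval_sect_geomSum_mul hr hr] at hn
    exact (sectorOrdered_aeval_sect_geomSum_pow_mul hr hdeg hcoeff n).eq_zero_of_geomSumStep_eq_zero
      hy hr hn
  induction n with
  | zero => exact eq_zero_of_forall_aeval_sect_eq_zero hr hdeg hy (by simpa using hsections 0 hzero)
  | succ n ih => exact ih (hsections (n + 1) hzero 0 hr)

end GeomSumPow

theorem realRooted_of_forall_aeval_eq_zero {q : ℝ[X]}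
    (h : ∀ z : ℂ, aeval z q = 0 → z.im ≠ 0 → q = 0) : RealRooted q := by
  intro z hz
  obtain ⟨hq, hroot⟩ := mem_roots'.mp hz
  by_contra him
  refine hq ?_
  rw [h z (by rwa [aeval_def, ← eval_map]) him, Polynomial.map_zero]

theorem realRooted_sect_zero_geomSum_pow_succ_mul {r : ℕ} (hr : 0 < r) {p : ℝ[X]}
    (hdeg : p.natDegree ≤ r) (hcoeff : ∀ k, 0 ≤ p.coeff k) (n : ℕ) :
    RealRooted (sect r 0 ((∑ j ∈ range r, X ^ j) ^ (n + 1) * p)) := by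
  refine realRooted_of_forall_aeval_eq_zero fun y hroot hy => ?_
  have hp : p = 0 :=
    eq_zero_of_aeval_sect_zero_geomSum_pow_succ_mul_eq_zero hr hdeg hcoeff hy n hroot
  simp [hp, sect]

theorem edgewise_veronese_real_rooted_general (d r : ℕ) (hr : d < r)
    (p : Polynomial ℝ) (hdeg : p.natDegree ≤ d + 1) (hcoeff : ∀ k, 0 ≤ p.coeff k) :
    RealRooted
      (sect r 0 ((∑ i ∈ Finset.range r, (Polynomial.X : Polynomial ℝ) ^ i) ^ (d + 1) * p)) :=
  realRooted_sect_zero_geomSum_pow_succ_mul (by omega) (by omega) hcoeff d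

/-- Theorem 6.4 (solution to the Mohammadi–Welker problem on edgewise subdivisions):
for `d ≥ 1`, `r > d`, and every real polynomial `p` of degree at most `d+1` with
nonnegative coefficients, the polynomial `((1 + x + ⋯ + x^{r-1})^{d+1} · p)^{⟨r,0⟩}`
has only real zeros. -/
theorem edgewise_veronese_real_rooted (d r : ℕ) (hd : 1 ≤ d) (hr : d < r)
    (p : Polynomial ℝ) (hdeg : p.natDegree ≤ d + 1) (hcoeff : ∀ k, 0 ≤ p.coeff k) :
    RealRooted
      (sect r 0 ((∑ i ∈ Finset.range r, (Polynomial.X : Polynomial ℝ) ^ i) ^ (d + 1) * p)) :=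
  edgewise_veronese_real_rooted_general d r hr p hdeg hcoeff
end
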